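/- arXiv:1907.03944 — 6 statements merged into one kernel-verified Lean document; each statement's English description precedes it below -/
import Mathlib

section
/- Let A, B ∈ B(H) and let f : [0,∞) → [0,∞) be an increasing operator convex function. Then ‖f((|A| + |B|)/4)‖ ≤ ‖∫₀¹ f(((1-t)|A| + t|B|)/2) dt‖ ≤ (1/2) f(‖A‖/2) + (1/2) f(‖B‖/2). -/
open scoped InnerProductSpace
open Polynomial MeasureTheory

set_option maxHeartbeats 1000000
set_option synthInstance.maxHeartbeats 400000

noncomputable def absCLM {H : Type*} [NormedAddCommGroup H] [InnerProductSpace ℂ H]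
    [CompleteSpace H] (A : H →L[ℂ] H) : H →L[ℂ] H :=
  cfc Real.sqrt (ContinuousLinearMap.adjoint A * A)

section aux

variable {H : Type*} [NormedAddCommGroup H] [InnerProductSpace ℂ H] [CompleteSpace H]

lemma absCLM_nonneg (A : H →L[ℂ] H) : 0 ≤ absCLM A :=
  cfc_nonneg fun x _ => Real.sqrt_nonneg x

lemma norm_absCLM (A : H →L[ℂ] H) : ‖absCLM A‖ = ‖A‖ := by
  have hT : (0:H→L[ℂ]H) ≤ ContinuousLinearMap.adjoint A * A := by
    simpa [ContinuousLinearMap.star_eq_adjoint] using star_mul_self_nonneg A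
  have hmul : absCLM A * absCLM A = ContinuousLinearMap.adjoint A * A := by
    rw [absCLM, ← cfc_mul _ _ _ Real.continuous_sqrt.continuousOn Real.continuous_sqrt.continuousOn]
    rw [cfc_congr (g := fun x => x) fun x hx => Real.mul_self_sqrt (spectrum_nonneg_of_nonneg hT hx)]
    exact cfc_id' ℝ _
  have hsa : IsSelfAdjoint (absCLM A) := IsSelfAdjoint.of_nonneg (absCLM_nonneg A)
  have h1 : ‖absCLM A‖ * ‖absCLM A‖ = ‖A‖ * ‖A‖ := by
    calc ‖absCLM A‖ * ‖absCLM A‖ = ‖star (absCLM A) * absCLM A‖ :=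
      (CStarRing.norm_star_mul_self).symm
    _ = ‖star A * A‖ := by rw [hsa.star_eq, hmul, ContinuousLinearMap.star_eq_adjoint]
    _ = ‖A‖ * ‖A‖ := CStarRing.norm_star_mul_self
  exact (mul_self_inj (norm_nonneg _) (norm_nonneg _)).mp h1

lemma my_smul_nonneg {a : H →L[ℂ] H} {c : ℝ} (hc : 0 ≤ c) (ha : 0 ≤ a) : 0 ≤ c • a := by
  rw [← cfc_smul_id (S := ℝ) (R := ℝ) c a (ha := IsSelfAdjoint.of_nonneg ha)]
  exact cfc_nonneg fun x hx => mul_nonneg hc (spectrum_nonneg_of_nonneg ha hx)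

lemma my_add_nonneg {a b : H →L[ℂ] H} (ha : 0 ≤ a) (hb : 0 ≤ b) : 0 ≤ a + b := by
  calc (0:H→L[ℂ]H) = 0 + 0 := by simp
  _ ≤ a + b := add_le_add ha hb

lemma clm_nontrivial [Nontrivial H] : Nontrivial (H →L[ℂ] H) := by
  obtain ⟨x, hx⟩ := exists_ne (0 : H)
  refine ⟨1, 0, fun h => hx ?_⟩
  simpa using DFunLike.congr_fun h x

lemma scalar_le_of_algebraMap_le [Nontrivial H] {r s : ℝ}
    (h : algebraMap ℝ (H →L[ℂ] H) r ≤ algebraMap ℝ (H →L[ℂ] H) s) : r ≤ s := by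
  have := clm_nontrivial (H := H)
  have h0 : (0:H→L[ℂ]H) ≤ algebraMap ℝ (H →L[ℂ] H) (s - r) := by
    rw [map_sub]; exact sub_nonneg.mpr h
  have := spectrum_nonneg_of_nonneg h0 (x := s - r) (by rw [spectrum.scalar_eq]; rfl)
  linarith

lemma one_nonneg' : (0 : H →L[ℂ] H) ≤ 1 := by
  simpa using star_mul_self_nonneg (1 : H →L[ℂ] H)

lemma scalar_convex [Nontrivial H] (f : ℝ → ℝ)
    (hf_opconv : ∀ (X Y : H →L[ℂ] H), 0 ≤ X → 0 ≤ Y → ∀ t ∈ Set.Icc (0:ℝ) 1,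
      cfc f ((1 - t) • X + t • Y) ≤ (1 - t) • cfc f X + t • cfc f Y)
    {c d t : ℝ} (hc : 0 ≤ c) (hd : 0 ≤ d) (ht : t ∈ Set.Icc (0:ℝ) 1) :
    f ((1-t)*c + t*d) ≤ (1-t) * f c + t * f d := by
  set e := algebraMap ℝ (H →L[ℂ] H)
  have hec : 0 ≤ e c := by
    rw [Algebra.algebraMap_eq_smul_one]; exact my_smul_nonneg hc one_nonneg'
  have hed : 0 ≤ e d := by
    rw [Algebra.algebraMap_eq_smul_one]; exact my_smul_nonneg hd one_nonneg'
  have h := hf_opconv (e c) (e d) hec hed t ht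
  have hcomb : (1 - t) • e c + t • e d = e ((1-t)*c + t*d) := by
    simp only [e, Algebra.algebraMap_eq_smul_one, smul_smul, ← add_smul]
  rw [hcomb, cfc_algebraMap, cfc_algebraMap, cfc_algebraMap] at h
  refine scalar_le_of_algebraMap_le (H := H) ?_
  rw [map_add]
  calc e (f ((1-t)*c + t*d)) ≤ (1 - t) • e (f c) + t • e (f d) := h
  _ = e ((1-t) * f c) + e (t * f d) := by
      simp only [e, Algebra.algebraMap_eq_smul_one, smul_smul]

lemma Z_nonneg (X Y : H →L[ℂ] H) (hX : 0 ≤ X) (hY : 0 ≤ Y) {t : ℝ} (ht : t ∈ Set.Icc (0:ℝ) 1) :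
    0 ≤ (2:ℝ)⁻¹ • ((1 - t) • X + t • Y) := by
  obtain ⟨ht0, ht1⟩ := ht
  exact my_smul_nonneg (by norm_num)
    (my_add_nonneg (my_smul_nonneg (by linarith) hX) (my_smul_nonneg ht0 hY))

lemma Z_norm_le (X Y : H →L[ℂ] H) {t : ℝ} (ht : t ∈ Set.Icc (0:ℝ) 1) :
    ‖(2:ℝ)⁻¹ • ((1 - t) • X + t • Y)‖ ≤ (2:ℝ)⁻¹ * ((1 - t) * ‖X‖ + t * ‖Y‖) := by
  obtain ⟨ht0, ht1⟩ := ht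
  rw [norm_smul]
  gcongr
  · norm_num
  calc ‖(1 - t) • X + t • Y‖ ≤ ‖(1 - t) • X‖ + ‖t • Y‖ := norm_add_le _ _
  _ = (1 - t) * ‖X‖ + t * ‖Y‖ := by
      rw [norm_smul, norm_smul, Real.norm_eq_abs, Real.norm_eq_abs,
        abs_of_nonneg (by linarith : (0:ℝ) ≤ 1 - t), abs_of_nonneg ht0]

lemma Z_spectrum [Nontrivial H] (X Y : H →L[ℂ] H) (hX : 0 ≤ X) (hY : 0 ≤ Y)
    {t : ℝ} (ht : t ∈ Set.Icc (0:ℝ) 1) :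
    spectrum ℝ ((2:ℝ)⁻¹ • ((1 - t) • X + t • Y)) ⊆ Set.Icc 0 (max ‖X‖ ‖Y‖) := by
  intro x hx
  refine ⟨spectrum_nonneg_of_nonneg (Z_nonneg X Y hX hY ht) hx, ?_⟩
  have h1 : ‖x‖ ≤ ‖(2:ℝ)⁻¹ • ((1 - t) • X + t • Y)‖ := spectrum.norm_le_norm_of_mem hx
  have h2 := Z_norm_le X Y ht
  obtain ⟨ht0, ht1⟩ := ht
  have hXm : ‖X‖ ≤ max ‖X‖ ‖Y‖ := le_max_left _ _
  have hYm : ‖Y‖ ≤ max ‖X‖ ‖Y‖ := le_max_right _ _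
  have hXn : (0:ℝ) ≤ ‖X‖ := norm_nonneg _
  have hYn : (0:ℝ) ≤ ‖Y‖ := norm_nonneg _
  rw [Real.norm_eq_abs] at h1
  have hax := le_abs_self x
  nlinarith

lemma cont_g [Nontrivial H] (X Y : H →L[ℂ] H) (hX : 0 ≤ X) (hY : 0 ≤ Y)
    (f : ℝ → ℝ) (hf_cont : ContinuousOn f (Set.Ici 0)) :
    ContinuousOn (fun t => cfc f ((2:ℝ)⁻¹ • ((1 - t) • X + t • Y))) (Set.Icc (0:ℝ) 1) := by
  set M := max ‖X‖ ‖Y‖ with hM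
  have hM0 : 0 ≤ M := le_trans (norm_nonneg X) (le_max_left _ _)
  have hp : ∀ n : ℕ, ∃ p : ℝ[X], ∀ x ∈ Set.Icc (0:ℝ) M, |p.eval x - f x| < 1/(n+1) := fun n =>
    exists_polynomial_near_of_continuousOn 0 M f
      (hf_cont.mono fun x hx => hx.1) _ (by positivity)
  choose p hp using hp
  have hZcont : Continuous (fun t : ℝ => (2:ℝ)⁻¹ • ((1 - t) • X + t • Y)) := by fun_prop
  have hTU : TendstoUniformlyOn
      (fun n t => aeval ((2:ℝ)⁻¹ • ((1 - t) • X + t • Y)) (p n))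
      (fun t => cfc f ((2:ℝ)⁻¹ • ((1 - t) • X + t • Y))) Filter.atTop (Set.Icc (0:ℝ) 1) := by
    rw [Metric.tendstoUniformlyOn_iff]
    intro ε hε
    obtain ⟨n₀, hn₀⟩ := exists_nat_one_div_lt hε
    filter_upwards [Filter.eventually_ge_atTop n₀] with n hn t ht
    set Z := (2:ℝ)⁻¹ • ((1 - t) • X + t • Y) with hZ
    have hsa : IsSelfAdjoint Z := IsSelfAdjoint.of_nonneg (Z_nonneg X Y hX hY ht)
    have hspec := Z_spectrum X Y hX hY ht
    have hfc : ContinuousOn f (spectrum ℝ Z) :=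
      hf_cont.mono (subset_trans hspec fun x hx => hx.1)
    rw [dist_eq_norm, ← cfc_polynomial (p n) Z,
      ← cfc_sub f (p n).eval Z hfc (p n).continuous.continuousOn]
    have hle : ‖cfc (fun x => f x - (p n).eval x) Z‖ ≤ 1/(n+1) := by
      refine norm_cfc_le (by positivity) fun x hx => ?_
      rw [Real.norm_eq_abs, abs_sub_comm]
      exact (hp n x (hspec hx)).le
    calc ‖cfc (fun x => f x - (p n).eval x) Z‖ ≤ 1/(n+1 : ℝ) := hle
    _ ≤ 1/(n₀+1 : ℝ) := by
        apply one_div_le_one_div_of_le (by positivity)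
        have : (n₀:ℝ) ≤ n := Nat.cast_le.mpr hn
        linarith
    _ < ε := hn₀
  exact hTU.continuousOn
    (Filter.Frequently.of_forall fun n => ((p n).continuous_aeval.comp hZcont).continuousOn)

end aux
theorem stmt0 {H : Type*} [NormedAddCommGroup H] [InnerProductSpace ℂ H] [CompleteSpace H]
    (A B : H →L[ℂ] H) (f : ℝ → ℝ)
    (hf_cont : ContinuousOn f (Set.Ici 0))
    (hf_nonneg : ∀ x : ℝ, 0 ≤ x → 0 ≤ f x)
    (hf_mono : MonotoneOn f (Set.Ici 0))
    (hf_opconv : ∀ (X Y : H →L[ℂ] H), 0 ≤ X → 0 ≤ Y → ∀ t ∈ Set.Icc (0:ℝ) 1,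
      cfc f ((1 - t) • X + t • Y) ≤ (1 - t) • cfc f X + t • cfc f Y) :
    ‖cfc f ((4:ℝ)⁻¹ • (absCLM A + absCLM B))‖ ≤
        ‖∫ t in (0:ℝ)..1, cfc f ((2:ℝ)⁻¹ • ((1 - t) • absCLM A + t • absCLM B))‖ ∧
      ‖∫ t in (0:ℝ)..1, cfc f ((2:ℝ)⁻¹ • ((1 - t) • absCLM A + t • absCLM B))‖ ≤
        (1 / 2) * f (‖A‖ / 2) + (1 / 2) * f (‖B‖ / 2) := by
  by_cases hsub : Subsingleton H
  · have hCLM : Subsingleton (H →L[ℂ] H) :=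
      ⟨fun a b => ContinuousLinearMap.ext fun x => Subsingleton.elim _ _⟩
    have hA0 : ‖A‖ = 0 := by rw [Subsingleton.elim A 0, norm_zero]
    have hB0 : ‖B‖ = 0 := by rw [Subsingleton.elim B 0, norm_zero]
    constructor
    · rw [Subsingleton.elim (cfc f ((4:ℝ)⁻¹ • (absCLM A + absCLM B))) 0, norm_zero]
      exact norm_nonneg _
    · rw [Subsingleton.elim (∫ t in (0:ℝ)..1,
        cfc f ((2:ℝ)⁻¹ • ((1 - t) • absCLM A + t • absCLM B))) 0, norm_zero, hA0, hB0]
      have := hf_nonneg 0 le_rfl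
      norm_num
      linarith
  · have : Nontrivial H := not_subsingleton_iff_nontrivial.mp hsub
    set X := absCLM A with hXdef
    set Y := absCLM B with hYdef
    have hX : 0 ≤ X := absCLM_nonneg A
    have hY : 0 ≤ Y := absCLM_nonneg B
    set g : ℝ → (H →L[ℂ] H) := fun t => cfc f ((2:ℝ)⁻¹ • ((1 - t) • X + t • Y)) with hgdef
    set C : H →L[ℂ] H := cfc f ((4:ℝ)⁻¹ • (X + Y)) with hCdef
    -- basic integrability facts
    have hgc : ContinuousOn g (Set.Icc (0:ℝ) 1) := cont_g X Y hX hY f hf_cont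
    have hgi : IntervalIntegrable g volume 0 1 :=
      hgc.intervalIntegrable_of_Icc zero_le_one
    have hg1c : ContinuousOn (fun t => g (1 - t)) (Set.Icc (0:ℝ) 1) := by
      refine hgc.comp (continuous_const.sub continuous_id).continuousOn ?_
      intro t ht
      exact ⟨by simpa using ht.2, by simpa using ht.1⟩
    have hg1i : IntervalIntegrable (fun t => g (1 - t)) volume 0 1 :=
      hg1c.intervalIntegrable_of_Icc zero_le_one
    -- nonnegativity of C
    have hquarter : (0:H→L[ℂ]H) ≤ (4:ℝ)⁻¹ • (X + Y) :=
      my_smul_nonneg (by norm_num) (my_add_nonneg hX hY)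
    have hC0 : 0 ≤ C := cfc_nonneg fun x hx =>
      hf_nonneg x (spectrum_nonneg_of_nonneg hquarter hx)
    -- midpoint convexity estimate
    have hmid : ∀ t ∈ Set.Icc (0:ℝ) 1, C ≤ (2:ℝ)⁻¹ • (g t + g (1 - t)) := by
      intro t ht
      obtain ⟨ht0, ht1⟩ := ht
      have ht' : t ∈ Set.Icc (0:ℝ) 1 := ⟨ht0, ht1⟩
      have ht'' : 1 - t ∈ Set.Icc (0:ℝ) 1 := ⟨by linarith, by linarith⟩
      have h := hf_opconv ((2:ℝ)⁻¹ • ((1 - t) • X + t • Y))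
        ((2:ℝ)⁻¹ • ((1 - (1 - t)) • X + (1 - t) • Y))
        (Z_nonneg X Y hX hY ht') (Z_nonneg X Y hX hY ht'')
        ((2:ℝ)⁻¹) ⟨by norm_num, by norm_num⟩
      have harg : (1 - (2:ℝ)⁻¹) • ((2:ℝ)⁻¹ • ((1 - t) • X + t • Y)) +
          (2:ℝ)⁻¹ • ((2:ℝ)⁻¹ • ((1 - (1 - t)) • X + (1 - t) • Y)) = (4:ℝ)⁻¹ • (X + Y) := by
        match_scalars <;> ring
      have hco : (1 - (2:ℝ)⁻¹) = (2:ℝ)⁻¹ := by norm_num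
      rw [harg, hco] at h
      rw [smul_add]
      exact h
    -- the positive cone argument: C ≤ ∫ g
    have hprob : IsProbabilityMeasure (volume.restrict (Set.Ioc (0:ℝ) 1)) := ⟨by simp⟩
    have hconv : Convex ℝ {W : H →L[ℂ] H | C ≤ W} := by
      intro a ha b hb s u hs hu hsu
      have h1 : 0 ≤ s • (a - C) := my_smul_nonneg hs (sub_nonneg.mpr ha)
      have h2 : 0 ≤ u • (b - C) := my_smul_nonneg hu (sub_nonneg.mpr hb)
      have h3 : (0:H→L[ℂ]H) ≤ s • (a - C) + u • (b - C) := my_add_nonneg h1 h2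
      have h4 : s • (a - C) + u • (b - C) = s • a + u • b - C := by
        calc s • (a - C) + u • (b - C) = s • a + u • b - (s • C + u • C) := by
              rw [smul_sub, smul_sub]; abel
        _ = s • a + u • b - C := by rw [← add_smul, hsu, one_smul]
      exact sub_nonneg.mp (h4 ▸ h3)
    have hclosed : IsClosed {W : H →L[ℂ] H | C ≤ W} := by
      have heq : {W : H →L[ℂ] H | C ≤ W} = (fun W => W - C) ⁻¹' {a | 0 ≤ a} := by
        ext W; simp [sub_nonneg]
      rw [heq]
      exact CStarAlgebra.isClosed_nonneg.preimage (continuous_id.sub continuous_const)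
    have hIntμ : Integrable (fun t => (2:ℝ)⁻¹ • (g t + g (1 - t)))
        (volume.restrict (Set.Ioc (0:ℝ) 1)) :=
      ((hgi.1.add hg1i.1).smul ((2:ℝ)⁻¹))
    have hmem : C ≤ ∫ t, ((2:ℝ)⁻¹ • (g t + g (1 - t)))
        ∂(volume.restrict (Set.Ioc (0:ℝ) 1)) := by
      have := hconv.integral_mem hclosed
        (((ae_restrict_mem measurableSet_Ioc).mono
          fun t ht => hmid t (Set.Ioc_subset_Icc_self ht))) hIntμ
      exact this
    have hI2 : ∫ t, ((2:ℝ)⁻¹ • (g t + g (1 - t)))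
        ∂(volume.restrict (Set.Ioc (0:ℝ) 1))
        = ∫ t in (0:ℝ)..1, ((2:ℝ)⁻¹ • (g t + g (1 - t))) :=
      (intervalIntegral.integral_of_le zero_le_one).symm
    have hflip : (∫ t in (0:ℝ)..1, g (1 - t)) = ∫ t in (0:ℝ)..1, g t := by
      simpa using intervalIntegral.integral_comp_sub_left (a := 0) (b := 1) g 1
    have hI3 : (∫ t in (0:ℝ)..1, ((2:ℝ)⁻¹ • (g t + g (1 - t))))
        = ∫ t in (0:ℝ)..1, g t := by
      rw [intervalIntegral.integral_smul, intervalIntegral.integral_add hgi hg1i, hflip]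
      have h2I : (∫ t in (0:ℝ)..1, g t) + (∫ t in (0:ℝ)..1, g t)
          = (2:ℝ) • ∫ t in (0:ℝ)..1, g t := (two_smul ℝ _).symm
      rw [h2I, smul_smul]
      norm_num
    have hCle : C ≤ ∫ t in (0:ℝ)..1, g t := by
      rw [hI2, hI3] at hmem; exact hmem
    constructor
    · exact CStarAlgebra.norm_le_norm_of_nonneg_of_le hC0 hCle
    · -- second inequality
      have hnorms : ‖X‖ = ‖A‖ := norm_absCLM A
      have hnormsB : ‖Y‖ = ‖B‖ := norm_absCLM B
      have hA2 : (0:ℝ) ≤ ‖A‖ / 2 := by positivity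
      have hB2 : (0:ℝ) ≤ ‖B‖ / 2 := by positivity
      have hptwise : ∀ t ∈ Set.Icc (0:ℝ) 1,
          ‖g t‖ ≤ (1 - t) * f (‖A‖ / 2) + t * f (‖B‖ / 2) := by
        intro t ht
        obtain ⟨ht0, ht1⟩ := ht
        have ht' : t ∈ Set.Icc (0:ℝ) 1 := ⟨ht0, ht1⟩
        have hfA := hf_nonneg _ hA2
        have hfB := hf_nonneg _ hB2
        have hscal : f ((1-t) * (‖A‖/2) + t * (‖B‖/2)) ≤
            (1-t) * f (‖A‖/2) + t * f (‖B‖/2) :=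
          scalar_convex (H := H) f hf_opconv hA2 hB2 ht'
        refine le_trans ?_ hscal
        refine norm_cfc_le ?_ fun x hx => ?_
        · have h0c : (0:ℝ) ≤ (1-t) * (‖A‖/2) + t * (‖B‖/2) := by nlinarith
          have := hf_nonneg _ h0c
          linarith [hscal]
        · have hx0 : 0 ≤ x := spectrum_nonneg_of_nonneg (Z_nonneg X Y hX hY ht') hx
          have h1 : ‖x‖ ≤ ‖(2:ℝ)⁻¹ • ((1 - t) • X + t • Y)‖ := spectrum.norm_le_norm_of_mem hx
          have h2 := Z_norm_le X Y ht'
          rw [Real.norm_eq_abs, abs_of_nonneg hx0] at h1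
          have hxm : x ≤ (1-t) * (‖A‖/2) + t * (‖B‖/2) := by
            rw [← hnorms, ← hnormsB]; nlinarith
          rw [Real.norm_eq_abs, abs_of_nonneg (hf_nonneg x hx0)]
          exact hf_mono (Set.mem_Ici.mpr hx0) (Set.mem_Ici.mpr (by nlinarith)) hxm
      have hnormint : ‖∫ t in (0:ℝ)..1, g t‖ ≤ ∫ t in (0:ℝ)..1, ‖g t‖ :=
        intervalIntegral.norm_integral_le_integral_norm zero_le_one
      have hmono : (∫ t in (0:ℝ)..1, ‖g t‖) ≤
          ∫ t in (0:ℝ)..1, ((1 - t) * f (‖A‖ / 2) + t * f (‖B‖ / 2)) := by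
        refine intervalIntegral.integral_mono_on zero_le_one
          (hgc.norm.intervalIntegrable_of_Icc zero_le_one)
          (Continuous.intervalIntegrable (by fun_prop) 0 1) hptwise
      have hval : (∫ t in (0:ℝ)..1, ((1 - t) * f (‖A‖ / 2) + t * f (‖B‖ / 2)))
          = (1/2) * f (‖A‖ / 2) + (1/2) * f (‖B‖ / 2) := by
        have heq : ∀ t : ℝ, (1 - t) * f (‖A‖ / 2) + t * f (‖B‖ / 2)
            = f (‖A‖ / 2) + t * (f (‖B‖ / 2) - f (‖A‖ / 2)) := by intro t; ring
        simp only [heq]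
        rw [intervalIntegral.integral_add (intervalIntegrable_const)
          (Continuous.intervalIntegrable (by fun_prop) 0 1),
          intervalIntegral.integral_const,
          intervalIntegral.integral_mul_const, integral_id]
        simp only [sub_zero, one_smul, smul_eq_mul]
        ring
      calc ‖∫ t in (0:ℝ)..1, g t‖ ≤ ∫ t in (0:ℝ)..1, ‖g t‖ := hnormint
      _ ≤ ∫ t in (0:ℝ)..1, ((1 - t) * f (‖A‖ / 2) + t * f (‖B‖ / 2)) := hmono
      _ = (1/2) * f (‖A‖ / 2) + (1/2) * f (‖B‖ / 2) := hval
end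

section
/- Let A, B ∈ B(H) and let f : [0,∞) → [0,∞) be a convex function which is continuous. Then for every unit vector x ∈ H: f(⟨((|A| + |B|)/2)x, x⟩) ≤ ∫₀¹ f(‖((1-t)|A| + t|B|)^{1/2} x‖²) dt ≤ (1/2) ‖f(|A|) + f(|B|)‖. -/
open scoped InnerProductSpace

section Aux

lemma my_line (f : ℝ → ℝ) (hf_cont : ContinuousOn f (Set.Ici 0))
    (hf_conv : ConvexOn ℝ (Set.Ici 0) f) {c : ℝ} (hc : 0 ≤ c) {ε : ℝ} (hε : 0 < ε) :
    ∃ m : ℝ, ∀ l, 0 ≤ l → f c - 2*ε + m*(l - c) ≤ f l := by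
  have hcont := (hf_cont c (Set.mem_Ici.mpr hc))
  rw [Metric.continuousWithinAt_iff] at hcont
  obtain ⟨δ, hδpos, hδ⟩ := hcont ε hε
  set δ' := δ/2 with hδ'
  have hδ'pos : 0 < δ' := by positivity
  have hbound : ∀ y, 0 ≤ y → |y - c| ≤ δ' → |f y - f c| ≤ ε := by
    intro y hy hyc
    have := hδ (Set.mem_Ici.mpr hy) (by rw [Real.dist_eq]; linarith [abs_nonneg (y - c)])
    rw [Real.dist_eq] at this; linarith
  set m := (f (c + δ') - f c) / δ' with hm
  have hcδ : (0:ℝ) ≤ c + δ' := by linarith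
  have hfcδ : |f (c + δ') - f c| ≤ ε :=
    hbound _ hcδ (by rw [show c + δ' - c = δ' by ring, abs_of_pos hδ'pos])
  have hmδ : m * δ' = f (c + δ') - f c := by rw [hm, div_mul_cancel₀ _ hδ'pos.ne']
  have habs := abs_le.mp hfcδ
  refine ⟨m, fun l hl => ?_⟩
  rcases lt_trichotomy l c with hlc | hlc | hlc
  · have hs := hf_conv.secant_mono (Set.mem_Ici.mpr hc) (Set.mem_Ici.mpr hl)
      (Set.mem_Ici.mpr hcδ) (ne_of_lt hlc) (by intro h; nlinarith) (by linarith)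
    rw [show c + δ' - c = δ' by ring, ← hm] at hs
    have h2 : m * (l - c) ≤ f l - f c := (div_le_iff_of_neg (by linarith)).mp hs
    linarith
  · subst hlc; nlinarith
  · rcases le_or_gt l (c + δ') with hl2 | hl2
    · have h1 : f c - ε ≤ f l := by
        have := abs_le.mp (hbound l hl (by rw [abs_le]; constructor <;> linarith))
        linarith
      have h2 : m * (l - c) ≤ ε := by
        rcases le_or_gt m 0 with hm0 | hm0
        · nlinarith
        · nlinarith
      linarith
    · have hs := hf_conv.secant_mono (Set.mem_Ici.mpr hc) (Set.mem_Ici.mpr hcδ)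
        (Set.mem_Ici.mpr hl) (by intro h; nlinarith) (by intro h; nlinarith) (by linarith)
      rw [show c + δ' - c = δ' by ring, ← hm] at hs
      have h2 : m * (l - c) ≤ f l - f c := ((le_div_iff₀ (by linarith)).mp hs)
      linarith

variable {H : Type*} [NormedAddCommGroup H] [InnerProductSpace ℂ H] [CompleteSpace H]

lemma my_re_inner_smul (r : ℝ) (v w : H) :
    RCLike.re ⟪(r • v : H), w⟫_ℂ = r * RCLike.re ⟪v, w⟫_ℂ := by
  rw [RCLike.real_smul_eq_coe_smul (K := ℂ) r v, inner_smul_left]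
  simp [RCLike.mul_re]

lemma my_smul_nonneg_s2 (P : H →L[ℂ] H) (hP : 0 ≤ P) (r : ℝ) (hr : 0 ≤ r) : 0 ≤ r • P := by
  rw [ContinuousLinearMap.nonneg_iff_isPositive] at hP ⊢
  refine ⟨?_, fun y => ?_⟩
  · exact ContinuousLinearMap.isSelfAdjoint_iff_isSymmetric.mp
      (show IsSelfAdjoint (r • P) by rw [IsSelfAdjoint, star_smul, star_trivial, hP.isSelfAdjoint.star_eq])
  · have := hP.re_inner_nonneg_left y
    simp only [ContinuousLinearMap.reApplyInnerSelf, ContinuousLinearMap.smul_apply,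
      my_re_inner_smul]
    exact mul_nonneg hr this

lemma my_inner_mono (T S : H →L[ℂ] H) (h : T ≤ S) (x : H) :
    RCLike.re ⟪T x, x⟫_ℂ ≤ RCLike.re ⟪S x, x⟫_ℂ := by
  have h2 := ((ContinuousLinearMap.le_def T S).mp h).re_inner_nonneg_left x
  simp only [ContinuousLinearMap.sub_apply, inner_sub_left, map_sub] at h2
  linarith

lemma my_norm_sq (X : H →L[ℂ] H) (hX : 0 ≤ X) (x : H) :
    ‖cfc Real.sqrt X x‖^2 = RCLike.re ⟪X x, x⟫_ℂ := by
  have hXsa : IsSelfAdjoint X := .of_nonneg hX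
  set S := cfc Real.sqrt X with hS
  have hSsa : IsSelfAdjoint S := cfc_predicate _ _
  have hmul : S * S = X := by
    rw [hS, ← cfc_mul Real.sqrt Real.sqrt X (by fun_prop) (by fun_prop)]
    have h1 : cfc (fun l => Real.sqrt l * Real.sqrt l) X = cfc (fun l : ℝ => l) X :=
      cfc_congr fun l hl => Real.mul_self_sqrt (spectrum_nonneg_of_nonneg hX hl)
    rw [h1, cfc_id' ℝ X]
  have h2 : (⟪S x, S x⟫_ℂ) = ⟪X x, x⟫_ℂ := by
    rw [← hmul, ContinuousLinearMap.mul_apply, ← ContinuousLinearMap.adjoint_inner_left,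
      hSsa.adjoint_eq]
  rw [norm_sq_eq_re_inner (𝕜 := ℂ), h2]

lemma my_jensen (f : ℝ → ℝ) (hf_cont : ContinuousOn f (Set.Ici 0))
    (hf_conv : ConvexOn ℝ (Set.Ici 0) f) (P : H →L[ℂ] H) (hP : 0 ≤ P)
    (x : H) (hx : ‖x‖ = 1) :
    f (RCLike.re ⟪P x, x⟫_ℂ) ≤ RCLike.re ⟪cfc f P x, x⟫_ℂ := by
  have hPsa : IsSelfAdjoint P := .of_nonneg hP
  have hspec : ∀ l ∈ spectrum ℝ P, 0 ≤ l := fun l hl => spectrum_nonneg_of_nonneg hP hl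
  set c := RCLike.re ⟪P x, x⟫_ℂ with hcdef
  have hc : 0 ≤ c := ((ContinuousLinearMap.nonneg_iff_isPositive P).mp hP).re_inner_nonneg_left x
  refine le_of_forall_pos_le_add fun ε hε => ?_
  obtain ⟨m, hm⟩ := my_line f hf_cont hf_conv hc (half_pos hε)
  have hfc : ContinuousOn f (spectrum ℝ P) := hf_cont.mono hspec
  have hle : cfc (fun l => (f c - 2*(ε/2)) + m*(l - c)) P ≤ cfc f P :=
    cfc_mono (fun l hl => hm l (hspec l hl)) (by fun_prop) hfc
  have heq : cfc (fun l => (f c - 2*(ε/2)) + m*(l - c)) P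
      = (f c - 2*(ε/2) - m*c) • (1 : H →L[ℂ] H) + m • P := by
    have h1 : (fun l : ℝ => (f c - 2*(ε/2)) + m*(l - c))
        = fun l : ℝ => (fun _ : ℝ => f c - 2*(ε/2) - m*c) l + (fun l : ℝ => m * l) l := by
      funext l; simp; ring
    rw [h1, cfc_add P _ _ (by fun_prop) (by fun_prop), cfc_const _ P hPsa,
      cfc_const_mul_id m P hPsa]
    simp only [← map_mul, ← map_sub, Algebra.algebraMap_eq_smul_one]
  rw [heq] at hle
  have hval := my_inner_mono _ _ hle x
  have hx2 : RCLike.re ⟪x, x⟫_ℂ = 1 := by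
    rw [← norm_sq_eq_re_inner (𝕜 := ℂ) x, hx]; norm_num
  simp only [ContinuousLinearMap.add_apply, ContinuousLinearMap.smul_apply,
    ContinuousLinearMap.one_apply, inner_add_left, map_add, my_re_inner_smul,
    hx2, ← hcdef] at hval
  linarith

end Aux

theorem stmt2 {H : Type*} [NormedAddCommGroup H] [InnerProductSpace ℂ H] [CompleteSpace H]
    (A B : H →L[ℂ] H) (f : ℝ → ℝ)
    (hf_cont : ContinuousOn f (Set.Ici 0))
    (hf_nonneg : ∀ x : ℝ, 0 ≤ x → 0 ≤ f x)
    (hf_conv : ConvexOn ℝ (Set.Ici 0) f)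
    (x : H) (hx : ‖x‖ = 1) :
    f ((⟪((2:ℝ)⁻¹ • (absCLM A + absCLM B)) x, x⟫_ℂ).re) ≤
        (∫ t in (0:ℝ)..1, f (‖(cfc Real.sqrt ((1 - t) • absCLM A + t • absCLM B)) x‖ ^ 2)) ∧
      (∫ t in (0:ℝ)..1, f (‖(cfc Real.sqrt ((1 - t) • absCLM A + t • absCLM B)) x‖ ^ 2)) ≤
        (1 / 2) * ‖cfc f (absCLM A) + cfc f (absCLM B)‖ := by
  set P := absCLM A with hPdef
  set Q := absCLM B with hQdef
  have hP : 0 ≤ P := cfc_nonneg fun l _ => Real.sqrt_nonneg l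
  have hQ : 0 ≤ Q := cfc_nonneg fun l _ => Real.sqrt_nonneg l
  set a := RCLike.re ⟪P x, x⟫_ℂ with hadef
  set b := RCLike.re ⟪Q x, x⟫_ℂ with hbdef
  have ha : 0 ≤ a := ((ContinuousLinearMap.nonneg_iff_isPositive P).mp hP).re_inner_nonneg_left x
  have hb : 0 ≤ b := ((ContinuousLinearMap.nonneg_iff_isPositive Q).mp hQ).re_inner_nonneg_left x
  -- replace integrand
  set φ : ℝ → ℝ := fun t => f ((1-t)*a + t*b) with hφdef
  set ψ : ℝ → ℝ := fun t => f ((1-t)*b + t*a) with hψdef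
  have hEq : Set.EqOn (fun t => f (‖(cfc Real.sqrt ((1 - t) • P + t • Q)) x‖ ^ 2))
      φ (Set.uIcc (0:ℝ) 1) := by
    intro t ht
    rw [Set.uIcc_of_le zero_le_one] at ht
    obtain ⟨ht0, ht1⟩ := ht
    have hXt : 0 ≤ (1 - t) • P + t • Q :=
      add_nonneg (my_smul_nonneg_s2 P hP _ (by linarith)) (my_smul_nonneg_s2 Q hQ t ht0)
    show f (‖(cfc Real.sqrt ((1 - t) • P + t • Q)) x‖ ^ 2) = f ((1-t)*a + t*b)
    rw [my_norm_sq _ hXt x]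
    congr 1
    simp only [ContinuousLinearMap.add_apply, ContinuousLinearMap.smul_apply, inner_add_left,
      map_add, my_re_inner_smul, ← hadef, ← hbdef]
  rw [intervalIntegral.integral_congr hEq]
  -- continuity and integrability
  have hmemφ : ∀ t ∈ Set.uIcc (0:ℝ) 1, (1-t)*a + t*b ∈ Set.Ici (0:ℝ) := by
    intro t ht
    rw [Set.uIcc_of_le zero_le_one] at ht
    obtain ⟨ht0, ht1⟩ := ht
    rw [Set.mem_Ici]; nlinarith
  have hmemψ : ∀ t ∈ Set.uIcc (0:ℝ) 1, (1-t)*b + t*a ∈ Set.Ici (0:ℝ) := by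
    intro t ht
    rw [Set.uIcc_of_le zero_le_one] at ht
    obtain ⟨ht0, ht1⟩ := ht
    rw [Set.mem_Ici]; nlinarith
  have hφc : ContinuousOn φ (Set.uIcc (0:ℝ) 1) :=
    hf_cont.comp (by fun_prop) hmemφ
  have hψc : ContinuousOn ψ (Set.uIcc (0:ℝ) 1) :=
    hf_cont.comp (by fun_prop) hmemψ
  have hφi : IntervalIntegrable φ MeasureTheory.volume 0 1 := hφc.intervalIntegrable
  have hψi : IntervalIntegrable ψ MeasureTheory.volume 0 1 := hψc.intervalIntegrable
  have hψφ : ∫ t in (0:ℝ)..1, ψ t = ∫ t in (0:ℝ)..1, φ t := by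
    have hfun : (fun t : ℝ => φ (1-t)) = ψ := by
      funext t; simp only [hφdef, hψdef]; ring_nf
    rw [← hfun]
    simpa using intervalIntegral.integral_comp_sub_left (a := (0:ℝ)) (b := 1) φ 1
  constructor
  · -- left inequality
    have hlhs : (⟪((2:ℝ)⁻¹ • (P + Q)) x, x⟫_ℂ).re = 2⁻¹*(a+b) := by
      rw [show (⟪((2:ℝ)⁻¹ • (P + Q)) x, x⟫_ℂ).re = RCLike.re ⟪((2:ℝ)⁻¹ • (P + Q)) x, x⟫_ℂ
        from rfl]
      simp only [ContinuousLinearMap.smul_apply, ContinuousLinearMap.add_apply, inner_add_left,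
        map_add, my_re_inner_smul, ← hadef, ← hbdef]
    rw [hlhs]
    have hkey : ∀ t ∈ Set.Icc (0:ℝ) 1, f (2⁻¹*(a+b)) ≤ 2⁻¹ * φ t + 2⁻¹ * ψ t := by
      intro t ht
      obtain ⟨ht0, ht1⟩ := ht
      have hm1 : (1-t)*a + t*b ∈ Set.Ici (0:ℝ) :=
        hmemφ t (by rw [Set.uIcc_of_le zero_le_one]; exact ⟨ht0, ht1⟩)
      have hm2 : (1-t)*b + t*a ∈ Set.Ici (0:ℝ) :=
        hmemψ t (by rw [Set.uIcc_of_le zero_le_one]; exact ⟨ht0, ht1⟩)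
      have h := hf_conv.2 hm1 hm2 (by norm_num : (0:ℝ) ≤ 2⁻¹) (by norm_num : (0:ℝ) ≤ 2⁻¹)
        (by norm_num)
      simp only [smul_eq_mul] at h
      have harg : 2⁻¹ * ((1-t)*a + t*b) + 2⁻¹ * ((1-t)*b + t*a) = 2⁻¹*(a+b) := by ring
      rw [harg] at h
      exact h
    calc f (2⁻¹*(a+b)) = ∫ _ in (0:ℝ)..1, f (2⁻¹*(a+b)) := by simp
      _ ≤ ∫ t in (0:ℝ)..1, (2⁻¹ * φ t + 2⁻¹ * ψ t) := by
          apply intervalIntegral.integral_mono_on zero_le_one intervalIntegrable_const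
            ((hφi.const_mul _).add (hψi.const_mul _)) hkey
      _ = ∫ t in (0:ℝ)..1, φ t := by
          rw [intervalIntegral.integral_add (hφi.const_mul _) (hψi.const_mul _),
            intervalIntegral.integral_const_mul, intervalIntegral.integral_const_mul, hψφ]
          ring
  · -- right inequality
    have hkey : ∀ t ∈ Set.Icc (0:ℝ) 1, φ t ≤ (1-t) * f a + t * f b := by
      intro t ht
      obtain ⟨ht0, ht1⟩ := ht
      have h := hf_conv.2 (Set.mem_Ici.mpr ha) (Set.mem_Ici.mpr hb)
        (by linarith : (0:ℝ) ≤ 1 - t) ht0 (by ring)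
      simpa only [smul_eq_mul] using h
    have h1 : f a ≤ RCLike.re ⟪cfc f P x, x⟫_ℂ := my_jensen f hf_cont hf_conv P hP x hx
    have h2 : f b ≤ RCLike.re ⟪cfc f Q x, x⟫_ℂ := my_jensen f hf_cont hf_conv Q hQ x hx
    have h3 : RCLike.re ⟪cfc f P x, x⟫_ℂ + RCLike.re ⟪cfc f Q x, x⟫_ℂ
        ≤ ‖cfc f P + cfc f Q‖ := by
      have h4 := re_inner_le_norm (𝕜 := ℂ) ((cfc f P + cfc f Q) x) x
      have h5 : ‖(cfc f P + cfc f Q) x‖ ≤ ‖cfc f P + cfc f Q‖ :=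
        le_trans ((cfc f P + cfc f Q).le_opNorm x) (by rw [hx]; ring_nf; exact le_refl _)
      simp only [ContinuousLinearMap.add_apply, inner_add_left, map_add, hx, mul_one] at h4 h5
      linarith
    calc ∫ t in (0:ℝ)..1, φ t ≤ ∫ t in (0:ℝ)..1, ((1-t) * f a + t * f b) :=
          intervalIntegral.integral_mono_on zero_le_one hφi
            (by apply Continuous.intervalIntegrable; fun_prop) hkey
      _ = (f a + f b)/2 := by
          rw [intervalIntegral.integral_add (by apply Continuous.intervalIntegrable; fun_prop)
            (by apply Continuous.intervalIntegrable; fun_prop),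
            intervalIntegral.integral_mul_const, intervalIntegral.integral_mul_const,
            intervalIntegral.integral_sub intervalIntegrable_const
              (by apply Continuous.intervalIntegrable; fun_prop)]
          simp
          ring
      _ ≤ (1/2) * ‖cfc f P + cfc f Q‖ := by linarith
end

section
/- Let A, B ∈ B(H) with H nontrivial, and let f : [0,∞) → [0,∞) be a convex function which is continuous. Then f(‖(|A| + |B|)/2‖) ≤ sup_{x ∈ H, ‖x‖=1} ∫₀¹ f(‖((1-t)|A| + t|B|)^{1/2} x‖²) dt ≤ (1/2) ‖f(|A|) + f(|B|)‖. -/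
open scoped InnerProductSpace

namespace Stmt3Aux

open RCLike MeasureTheory

/-! ### Convexity helpers -/

lemma supp_exact {f : ℝ → ℝ} (hf : ConvexOn ℝ (Set.Ici 0) f) {a : ℝ} (ha : 0 < a) :
    ∃ c : ℝ, ∀ s ∈ Set.Ici (0:ℝ), f a + c * (s - a) ≤ f s := by
  set L : Set ℝ := (fun s => (f s - f a) / (s - a)) '' Set.Ico 0 a with hL
  have hmem : ∀ s ∈ Set.Ico (0:ℝ) a, ((f s - f a) / (s - a)) ∈ L := fun s hs => ⟨s, hs, rfl⟩
  have hne : L.Nonempty := ⟨_, hmem 0 ⟨le_refl 0, ha⟩⟩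
  have hub : ∀ u ∈ Set.Ioi a, ∀ v ∈ L, v ≤ (f u - f a) / (u - a) := by
    rintro u hu v ⟨s, hs, rfl⟩
    exact hf.secant_mono ha.le (le_trans (le_refl _) hs.1) (le_trans ha.le (le_of_lt hu))
      (ne_of_lt hs.2) (ne_of_gt hu) (le_of_lt (lt_trans hs.2 hu))
  have hbdd : BddAbove L := ⟨(f (a+1) - f a) / (a+1-a), fun v hv => hub (a+1) (by simp) v hv⟩
  refine ⟨sSup L, fun s hs => ?_⟩
  rcases lt_trichotomy s a with h | rfl | h
  · have h1 : (f s - f a) / (s - a) ≤ sSup L := le_csSup hbdd (hmem s ⟨hs, h⟩)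
    rw [div_le_iff_of_neg (by linarith)] at h1
    linarith
  · simp
  · have h1 : sSup L ≤ (f s - f a) / (s - a) := csSup_le hne (hub s h)
    rw [le_div_iff₀ (by linarith)] at h1
    linarith

lemma supp_eps {f : ℝ → ℝ} (hf : ConvexOn ℝ (Set.Ici 0) f)
    (hc : ContinuousOn f (Set.Ici 0)) {a : ℝ} (ha : 0 ≤ a) {ε : ℝ} (hε : 0 < ε) :
    ∃ c : ℝ, ∀ s ∈ Set.Ici (0:ℝ), f a - ε + c * (s - a) ≤ f s := by
  rcases ha.lt_or_eq with h | rfl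
  · obtain ⟨c, hc'⟩ := supp_exact hf h
    exact ⟨c, fun s hs => by linarith [hc' s hs]⟩
  · have hcw : ContinuousWithinAt f (Set.Ici 0) 0 := hc 0 Set.self_mem_Ici
    rw [Metric.continuousWithinAt_iff] at hcw
    obtain ⟨δ, hδ, hδ'⟩ := hcw ε hε
    have hδ2 : (0:ℝ) < δ/2 := by linarith
    have hnear : ∀ s ∈ Set.Ici (0:ℝ), s ≤ δ/2 → f 0 - ε < f s := by
      intro s hs hsδ
      have := hδ' hs (by rw [Real.dist_eq]; rw [abs_of_nonneg (by simpa using hs)]; linarith)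
      rw [Real.dist_eq, abs_lt] at this
      linarith
    obtain ⟨c₀, hc₀⟩ := supp_exact hf hδ2
    refine ⟨min c₀ 0, fun s hs => ?_⟩
    rcases le_or_gt s (δ/2) with h | h
    · have h1 := hnear s hs h
      have h2 : min c₀ 0 * (s - 0) ≤ 0 :=
        mul_nonpos_of_nonpos_of_nonneg (min_le_right _ _) (by simpa using hs)
      linarith
    · have h1 := hc₀ s hs
      have h2 := hnear (δ/2) (le_of_lt hδ2) le_rfl
      have h3 : min c₀ 0 * (s - 0) ≤ c₀ * (s - δ/2) := by
        rcases le_or_gt 0 c₀ with hc' | hc'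
        · rw [min_eq_right hc']
          nlinarith
        · rw [min_eq_left hc'.le]
          nlinarith
      linarith

/-! ### Integral helpers -/

lemma affine_cont (p q : ℝ) : Continuous (fun t : ℝ => (1-t)*p + t*q) := by fun_prop

lemma affine_mem {p q : ℝ} (hp : 0 ≤ p) (hq : 0 ≤ q) {t : ℝ} (ht0 : 0 ≤ t) (ht1 : t ≤ 1) :
    (1-t)*p + t*q ∈ Set.Ici (0:ℝ) := by
  have : 0 ≤ (1-t)*p := mul_nonneg (by linarith) hp
  have : 0 ≤ t*q := mul_nonneg ht0 hq
  simp only [Set.mem_Ici]; linarith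

lemma integral_affine (p q : ℝ) : (∫ t in (0:ℝ)..1, ((1-t)*p + t*q)) = (p+q)/2 := by
  have h : (fun t : ℝ => (1-t)*p + t*q) = fun t => p + (q - p) * t := by funext t; ring
  rw [h]
  rw [intervalIntegral.integral_add ((by fun_prop : Continuous fun _ : ℝ => p).intervalIntegrable 0 1)
    ((by fun_prop : Continuous fun t : ℝ => (q-p)*t).intervalIntegrable 0 1)]
  rw [intervalIntegral.integral_const, intervalIntegral.integral_const_mul, integral_id]
  norm_num; ring

lemma cont_on_f_affine {f : ℝ → ℝ} (hf : ContinuousOn f (Set.Ici 0)) {p q : ℝ}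
    (hp : 0 ≤ p) (hq : 0 ≤ q) :
    ContinuousOn (fun t : ℝ => f ((1-t)*p + t*q)) (Set.Icc 0 1) := by
  apply hf.comp (affine_cont p q).continuousOn
  intro t ht
  exact affine_mem hp hq ht.1 ht.2

lemma HH_right {f : ℝ → ℝ} (hcont : ContinuousOn f (Set.Ici 0)) (hconv : ConvexOn ℝ (Set.Ici 0) f)
    {p q : ℝ} (hp : 0 ≤ p) (hq : 0 ≤ q) :
    (∫ t in (0:ℝ)..1, f ((1-t)*p + t*q)) ≤ (f p + f q)/2 := by
  have hint : IntervalIntegrable (fun t : ℝ => f ((1-t)*p + t*q)) volume 0 1 := by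
    apply ContinuousOn.intervalIntegrable
    rw [Set.uIcc_of_le zero_le_one]
    exact cont_on_f_affine hcont hp hq
  have hle : ∀ t ∈ Set.Icc (0:ℝ) 1, f ((1-t)*p + t*q) ≤ (1-t) * f p + t * f q := by
    intro t ht
    exact hconv.2 hp hq (by linarith [ht.2]) ht.1 (by ring)
  calc (∫ t in (0:ℝ)..1, f ((1-t)*p + t*q)) ≤ ∫ t in (0:ℝ)..1, ((1-t) * f p + t * f q) := by
        apply intervalIntegral.integral_mono_on zero_le_one hint
          ((by fun_prop : Continuous fun t : ℝ => (1-t)*f p + t*f q).intervalIntegrable 0 1) hle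
    _ = (f p + f q)/2 := integral_affine (f p) (f q)

lemma HH_left {f : ℝ → ℝ} (hcont : ContinuousOn f (Set.Ici 0)) (hconv : ConvexOn ℝ (Set.Ici 0) f)
    {p q : ℝ} (hp : 0 ≤ p) (hq : 0 ≤ q) :
    f ((p+q)/2) ≤ ∫ t in (0:ℝ)..1, f ((1-t)*p + t*q) := by
  set μ : Measure ℝ := volume.restrict (Set.Ioc (0:ℝ) 1) with hμ
  have : IsProbabilityMeasure μ := ⟨by simp [hμ, Real.volume_Ioc]⟩
  have h1 : (∫ t in (0:ℝ)..1, f ((1-t)*p + t*q)) = ∫ t, f ((1-t)*p + t*q) ∂μ := by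
    rw [intervalIntegral.integral_of_le zero_le_one]
  have h2 : (∫ t in (0:ℝ)..1, ((1-t)*p + t*q)) = ∫ t, ((1-t)*p + t*q) ∂μ := by
    rw [intervalIntegral.integral_of_le zero_le_one]
  have hfs : ∀ᵐ t ∂μ, (1-t)*p + t*q ∈ Set.Ici (0:ℝ) := by
    rw [hμ, ae_restrict_iff' measurableSet_Ioc]
    filter_upwards with t ht
    exact affine_mem hp hq ht.1.le ht.2
  have hfi : Integrable (fun t : ℝ => (1-t)*p + t*q) μ := by
    apply Integrable.mono' (integrable_const (|p| + |q|)) ((affine_cont p q).aestronglyMeasurable)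
    rw [hμ, ae_restrict_iff' measurableSet_Ioc]
    filter_upwards with t ht
    have ht1 : |1 - t| ≤ 1 := by
      rw [abs_of_nonneg (by linarith [ht.2])]; linarith [ht.1.le]
    have ht2 : |t| ≤ 1 := by rw [abs_of_pos ht.1]; exact ht.2
    have h1 : |(1-t)*p| ≤ |p| := by
      rw [abs_mul]; exact mul_le_of_le_one_left (abs_nonneg p) ht1
    have h2 : |t*q| ≤ |q| := by
      rw [abs_mul]; exact mul_le_of_le_one_left (abs_nonneg q) ht2
    calc ‖(1-t)*p + t*q‖ ≤ |(1-t)*p| + |t*q| := abs_add_le _ _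
      _ ≤ |p| + |q| := by linarith
  have hgi : Integrable ((fun s => f s) ∘ (fun t : ℝ => (1-t)*p + t*q)) μ := by
    rw [hμ]
    apply ContinuousOn.integrableOn_compact isCompact_Icc (cont_on_f_affine hcont hp hq)
      |>.mono_set Set.Ioc_subset_Icc_self
  have := hconv.map_integral_le hcont isClosed_Ici hfs hfi hgi
  rw [← h1, ← h2, integral_affine] at this
  exact this

/-! ### Operator helpers -/

variable {H : Type*} [NormedAddCommGroup H] [InnerProductSpace ℂ H] [CompleteSpace H]

lemma sqrt_mul_self' (S : H →L[ℂ] H) (hS : 0 ≤ S) :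
    cfc Real.sqrt S * cfc Real.sqrt S = S := by
  have hsa : IsSelfAdjoint S := IsSelfAdjoint.of_nonneg hS
  rw [← cfc_mul Real.sqrt Real.sqrt S (by fun_prop) (by fun_prop),
    cfc_congr (f := fun x => Real.sqrt x * Real.sqrt x) (g := id)
      (fun x hx => Real.mul_self_sqrt (spectrum_nonneg_of_nonneg hS hx)),
    cfc_id ℝ S]

lemma sqrt_sa (S : H →L[ℂ] H) : IsSelfAdjoint (cfc Real.sqrt S) := by
  by_cases h : IsSelfAdjoint S
  · exact cfc_predicate Real.sqrt S
  · rw [cfc_apply_of_not_predicate S h]; exact .zero _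

lemma norm_sqrt_apply_sq (S : H →L[ℂ] H) (hS : 0 ≤ S) (x : H) :
    ‖(cfc Real.sqrt S) x‖ ^ 2 = re ⟪S x, x⟫_ℂ := by
  set T := cfc Real.sqrt S with hT
  have h1 : ⟪S x, x⟫_ℂ = ⟪T x, T x⟫_ℂ := by
    conv_lhs => rw [← sqrt_mul_self' S hS]
    rw [ContinuousLinearMap.mul_apply, ← ContinuousLinearMap.adjoint_inner_left,
      ← ContinuousLinearMap.star_eq_adjoint, (sqrt_sa S).star_eq]
  rw [h1, inner_self_eq_norm_sq]

lemma inner_mono {P Q : H →L[ℂ] H} (h : P ≤ Q) (x : H) : re ⟪P x, x⟫_ℂ ≤ re ⟪Q x, x⟫_ℂ := by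
  rw [ContinuousLinearMap.le_def] at h
  have := h.re_inner_nonneg_left x
  simp only [ContinuousLinearMap.sub_apply, inner_sub_left, map_sub] at this
  linarith

lemma inner_nonneg' {P : H →L[ℂ] H} (h : 0 ≤ P) (x : H) : 0 ≤ re ⟪P x, x⟫_ℂ := by
  simpa using inner_mono h x

lemma re_inner_smul (r : ℝ) (P : H →L[ℂ] H) (x : H) :
    re ⟪(r • P) x, x⟫_ℂ = r * re ⟪P x, x⟫_ℂ := by
  simp only [ContinuousLinearMap.coe_smul', Pi.smul_apply]
  rw [RCLike.real_smul_eq_coe_smul (K := ℂ), inner_smul_real_left, smul_re]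

lemma smul_nonneg'' {P : H →L[ℂ] H} (h : 0 ≤ P) {r : ℝ} (hr : 0 ≤ r) : 0 ≤ r • P := by
  rw [ContinuousLinearMap.nonneg_iff_isPositive] at h ⊢
  have hsa : IsSelfAdjoint (r • P) := by
    rw [RCLike.real_smul_eq_coe_smul (K := ℂ)]
    rw [IsSelfAdjoint, star_smul, h.isSelfAdjoint.star_eq]
    norm_num
  refine ⟨ContinuousLinearMap.isSelfAdjoint_iff_isSymmetric.mp hsa, fun x => ?_⟩
  rw [ContinuousLinearMap.reApplyInnerSelf_apply]
  simp only [ContinuousLinearMap.coe_smul', Pi.smul_apply]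
  rw [RCLike.real_smul_eq_coe_smul (K := ℂ), inner_smul_real_left]
  simp only [smul_re, smul_eq_mul]
  exact mul_nonneg hr (h.re_inner_nonneg_left x)

lemma inner_le_norm' {P : H →L[ℂ] H} (x : H) (hx : ‖x‖ = 1) : re ⟪P x, x⟫_ℂ ≤ ‖P‖ := by
  calc re ⟪P x, x⟫_ℂ ≤ ‖⟪P x, x⟫_ℂ‖ := RCLike.re_le_norm _
    _ ≤ ‖P x‖ * ‖x‖ := norm_inner_le_norm _ _
    _ ≤ ‖P‖ * ‖x‖ * ‖x‖ := by gcongr; exact P.le_opNorm x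
    _ = ‖P‖ := by rw [hx]; ring

lemma jensen_cfc {f : ℝ → ℝ} (hconv : ConvexOn ℝ (Set.Ici 0) f)
    (hcont : ContinuousOn f (Set.Ici 0))
    {S : H →L[ℂ] H} (hS : 0 ≤ S) {x : H} (hx : ‖x‖ = 1) :
    f (re ⟪S x, x⟫_ℂ) ≤ re ⟪(cfc f S) x, x⟫_ℂ := by
  have hsa : IsSelfAdjoint S := IsSelfAdjoint.of_nonneg hS
  have hspec : spectrum ℝ S ⊆ Set.Ici 0 := fun s hs => spectrum_nonneg_of_nonneg hS hs
  have hfs : ContinuousOn f (spectrum ℝ S) := hcont.mono hspec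
  set a : ℝ := re ⟪S x, x⟫_ℂ with ha
  have ha0 : 0 ≤ a := inner_nonneg' hS x
  have key : ∀ ε > (0:ℝ), f a - ε ≤ re ⟪(cfc f S) x, x⟫_ℂ := by
    intro ε hε
    obtain ⟨c, hcsupp⟩ := supp_eps hconv hcont ha0 hε
    set k : ℝ := f a - ε - c * a with hk
    have hle : cfc (fun s : ℝ => k + c * s) S ≤ cfc f S := by
      refine cfc_mono (fun s hs => ?_) (by fun_prop) hfs
      have := hcsupp s (hspec hs)
      rw [hk]; ring_nf; ring_nf at this; linarith
    have heq : cfc (fun s : ℝ => k + c * s) S = algebraMap ℝ (H →L[ℂ] H) k + c • S := by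
      rw [cfc_const_add k (fun s => c * s) S (by fun_prop), cfc_const_mul_id c S]
    have hpair : re ⟪(algebraMap ℝ (H →L[ℂ] H) k + c • S) x, x⟫_ℂ = k + c * a := by
      rw [ContinuousLinearMap.add_apply, inner_add_left, map_add]
      congr 1
      · rw [Algebra.algebraMap_eq_smul_one]
        simp only [ContinuousLinearMap.coe_smul', Pi.smul_apply, ContinuousLinearMap.one_apply]
        rw [RCLike.real_smul_eq_coe_smul (K := ℂ), inner_smul_real_left]
        simp only [smul_re, smul_eq_mul]
        rw [inner_self_eq_norm_sq, hx]; ring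
      · simp only [ContinuousLinearMap.coe_smul', Pi.smul_apply]
        rw [RCLike.real_smul_eq_coe_smul (K := ℂ), inner_smul_real_left, smul_re]
    have := inner_mono hle x
    rw [heq] at this
    rw [hpair] at this
    rw [hk] at this
    linarith
  by_contra hcon
  push_neg at hcon
  obtain ⟨ε, hε, hlt⟩ : ∃ ε > 0, re ⟪(cfc f S) x, x⟫_ℂ < f a - ε :=
    ⟨(f a - re ⟪(cfc f S) x, x⟫_ℂ)/2, by linarith, by linarith⟩
  linarith [key ε hε]

variable [Nontrivial H]

lemma exists_unit_norm_approx (T : H →L[ℂ] H) {ε : ℝ} (hε : 0 < ε) :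
    ∃ x : H, ‖x‖ = 1 ∧ ‖T‖ - ε ≤ ‖T x‖ := by
  obtain ⟨z, hz⟩ := exists_norm_eq H (zero_le_one (α := ℝ))
  rcases le_or_gt ‖T‖ ε with h | h
  · exact ⟨z, hz, by have := norm_nonneg (T z); linarith⟩
  · by_contra hcon
    push_neg at hcon
    have hb : ∀ y : H, ‖T y‖ ≤ (‖T‖ - ε) * ‖y‖ := by
      intro y
      rcases eq_or_ne y 0 with rfl | hy
      · simp
      · set u : H := (‖y‖ : ℂ)⁻¹ • y with hu
        have hyn : (0:ℝ) < ‖y‖ := norm_pos_iff.mpr hy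
        have hun : ‖u‖ = 1 := by
          rw [hu, norm_smul]
          simp [abs_of_nonneg hyn.le, inv_mul_cancel₀ hyn.ne']
        have h1 := (hcon u hun).le
        have hTu : ‖T u‖ = ‖y‖⁻¹ * ‖T y‖ := by
          rw [hu, ContinuousLinearMap.map_smul, norm_smul]
          simp
        rw [hTu] at h1
        calc ‖T y‖ = ‖y‖ * (‖y‖⁻¹ * ‖T y‖) := by field_simp
          _ ≤ ‖y‖ * (‖T‖ - ε) := by gcongr
          _ = (‖T‖ - ε) * ‖y‖ := mul_comm _ _
    have := T.opNorm_le_bound (by linarith) hb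
    linarith

lemma exists_unit_inner_approx {M : H →L[ℂ] H} (hM : 0 ≤ M) {ε : ℝ} (hε : 0 < ε) :
    ∃ x : H, ‖x‖ = 1 ∧ ‖M‖ - ε ≤ re ⟪M x, x⟫_ℂ := by
  set T := cfc Real.sqrt M with hT
  have hsa : IsSelfAdjoint M := IsSelfAdjoint.of_nonneg hM
  have hTsa : IsSelfAdjoint T := cfc_predicate Real.sqrt M
  have hnorm : ‖T‖ * ‖T‖ = ‖M‖ := by
    rw [← CStarRing.norm_star_mul_self (x := T), hTsa.star_eq]
    congr 1
    exact sqrt_mul_self' M hM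
  set δ : ℝ := ε / (2 * ‖T‖ + 1) with hδ
  have hδpos : 0 < δ := by positivity
  obtain ⟨x, hx1, hx2⟩ := exists_unit_norm_approx T hδpos
  refine ⟨x, hx1, ?_⟩
  have hkey : ‖T x‖ ^ 2 = re ⟪M x, x⟫_ℂ := norm_sqrt_apply_sq M hM x
  rw [← hkey]
  have hd : δ * (2 * ‖T‖ + 1) = ε := div_mul_cancel₀ _ (by positivity)
  rcases le_or_gt (‖T‖ - δ) 0 with h | h
  · nlinarith [sq_nonneg (‖T x‖), norm_nonneg (T x), norm_nonneg T, hδpos]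
  · have h2 : (‖T‖ - δ) ^ 2 ≤ ‖T x‖ ^ 2 := by nlinarith
    nlinarith [norm_nonneg T, hδpos, sq_nonneg δ]

end Stmt3Aux

open Stmt3Aux RCLike in
theorem stmt3 {H : Type*} [NormedAddCommGroup H] [InnerProductSpace ℂ H] [CompleteSpace H]
    [Nontrivial H]
    (A B : H →L[ℂ] H) (f : ℝ → ℝ)
    (hf_cont : ContinuousOn f (Set.Ici 0))
    (hf_nonneg : ∀ x : ℝ, 0 ≤ x → 0 ≤ f x)
    (hf_conv : ConvexOn ℝ (Set.Ici 0) f) :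
    f ‖(2:ℝ)⁻¹ • (absCLM A + absCLM B)‖ ≤
        (⨆ x : {x : H // ‖x‖ = 1},
          ∫ t in (0:ℝ)..1, f (‖(cfc Real.sqrt ((1 - t) • absCLM A + t • absCLM B)) x.1‖ ^ 2)) ∧
      (⨆ x : {x : H // ‖x‖ = 1},
          ∫ t in (0:ℝ)..1, f (‖(cfc Real.sqrt ((1 - t) • absCLM A + t • absCLM B)) x.1‖ ^ 2)) ≤
        (1 / 2) * ‖cfc f (absCLM A) + cfc f (absCLM B)‖ := by
  set S := absCLM A with hSdef
  set T := absCLM B with hTdef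
  have hS : 0 ≤ S := cfc_nonneg (fun x _ => Real.sqrt_nonneg x)
  have hT : 0 ≤ T := cfc_nonneg (fun x _ => Real.sqrt_nonneg x)
  set G : {x : H // ‖x‖ = 1} → ℝ := fun x =>
    ∫ t in (0:ℝ)..1, f (‖(cfc Real.sqrt ((1 - t) • S + t • T)) x.1‖ ^ 2) with hGdef
  -- rewrite the integrand
  have hG : ∀ x : {x : H // ‖x‖ = 1}, G x =
      ∫ t in (0:ℝ)..1, f ((1-t) * re ⟪S x.1, x.1⟫_ℂ + t * re ⟪T x.1, x.1⟫_ℂ) := by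
    intro x
    apply intervalIntegral.integral_congr
    intro t ht
    rw [Set.uIcc_of_le zero_le_one] at ht
    dsimp only
    have hMt : 0 ≤ (1 - t) • S + t • T :=
      add_nonneg (smul_nonneg'' hS (by linarith [ht.2])) (smul_nonneg'' hT ht.1)
    rw [norm_sqrt_apply_sq _ hMt]
    congr 1
    rw [ContinuousLinearMap.add_apply, inner_add_left, map_add, re_inner_smul, re_inner_smul]
  have ha : ∀ x : {x : H // ‖x‖ = 1}, 0 ≤ re ⟪S x.1, x.1⟫_ℂ := fun x => inner_nonneg' hS x.1
  have hb : ∀ x : {x : H // ‖x‖ = 1}, 0 ≤ re ⟪T x.1, x.1⟫_ℂ := fun x => inner_nonneg' hT x.1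
  -- upper bound
  have hupper : ∀ x : {x : H // ‖x‖ = 1}, G x ≤ (1 / 2) * ‖cfc f S + cfc f T‖ := by
    intro x
    rw [hG x]
    set p := re ⟪S x.1, x.1⟫_ℂ
    set q := re ⟪T x.1, x.1⟫_ℂ
    calc (∫ t in (0:ℝ)..1, f ((1-t)*p + t*q)) ≤ (f p + f q)/2 :=
          HH_right hf_cont hf_conv (ha x) (hb x)
      _ ≤ (re ⟪(cfc f S) x.1, x.1⟫_ℂ + re ⟪(cfc f T) x.1, x.1⟫_ℂ)/2 := by
          have h1 := jensen_cfc hf_conv hf_cont hS x.2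
          have h2 := jensen_cfc hf_conv hf_cont hT x.2
          linarith
      _ = re ⟪(cfc f S + cfc f T) x.1, x.1⟫_ℂ / 2 := by
          rw [ContinuousLinearMap.add_apply, inner_add_left, map_add]
      _ ≤ (1 / 2) * ‖cfc f S + cfc f T‖ := by
          have := inner_le_norm' (P := cfc f S + cfc f T) x.1 x.2
          linarith
  -- nonempty index type
  obtain ⟨z, hz⟩ := exists_norm_eq H (zero_le_one (α := ℝ))
  have : Nonempty {x : H // ‖x‖ = 1} := ⟨⟨z, hz⟩⟩
  have hbdd : BddAbove (Set.range G) :=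
    ⟨(1 / 2) * ‖cfc f S + cfc f T‖, by rintro _ ⟨x, rfl⟩; exact hupper x⟩
  refine ⟨?_, ciSup_le hupper⟩
  -- lower bound
  set M : H →L[ℂ] H := (2:ℝ)⁻¹ • (S + T) with hMdef
  have hM : 0 ≤ M := smul_nonneg'' (add_nonneg hS hT) (by norm_num)
  have hMval : ∀ x : {x : H // ‖x‖ = 1},
      re ⟪M x.1, x.1⟫_ℂ = (re ⟪S x.1, x.1⟫_ℂ + re ⟪T x.1, x.1⟫_ℂ)/2 := by
    intro x
    rw [hMdef, re_inner_smul, ContinuousLinearMap.add_apply, inner_add_left, map_add]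
    ring
  apply le_of_forall_pos_le_add
  intro ε hε
  have hMn : ‖M‖ ∈ Set.Ici (0:ℝ) := norm_nonneg M
  have hcw : ContinuousWithinAt f (Set.Ici 0) ‖M‖ := hf_cont _ hMn
  rw [Metric.continuousWithinAt_iff] at hcw
  obtain ⟨δ, hδpos, hδ⟩ := hcw ε hε
  obtain ⟨x, hx1, hx2⟩ := exists_unit_inner_approx hM (half_pos hδpos)
  set x' : {x : H // ‖x‖ = 1} := ⟨x, hx1⟩
  have hm1 : re ⟪M x, x⟫_ℂ ≤ ‖M‖ := inner_le_norm' x hx1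
  have hmem : re ⟪M x, x⟫_ℂ ∈ Set.Ici (0:ℝ) := inner_nonneg' hM x
  have hdist : dist (re ⟪M x, x⟫_ℂ) ‖M‖ < δ := by
    rw [Real.dist_eq, abs_of_nonpos (by linarith)]
    linarith
  have hfcl : f ‖M‖ ≤ f (re ⟪M x, x⟫_ℂ) + ε := by
    have := hδ hmem hdist
    rw [Real.dist_eq, abs_lt] at this
    linarith
  have hHH : f (re ⟪M x, x⟫_ℂ) ≤ G x' := by
    rw [hG x', hMval x']
    exact HH_left hf_cont hf_conv (ha x') (hb x')
  have hsup : G x' ≤ ⨆ y : {x : H // ‖x‖ = 1}, G y := le_ciSup hbdd x'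
  calc f ‖M‖ ≤ f (re ⟪M x, x⟫_ℂ) + ε := hfcl
    _ ≤ (⨆ y : {x : H // ‖x‖ = 1}, G y) + ε := by linarith
end

section
/- Let H be a nontrivial complex Hilbert space and let c > 0 be a constant such that w(A)² ≤ c ‖(3|A| + |A*|)² + (|A| + 3|A*|)²‖ for every A ∈ B(H). Then c ≥ 1/32. -/
open scoped InnerProductSpace

noncomputable def numRad {H : Type*} [NormedAddCommGroup H] [InnerProductSpace ℂ H]
    [CompleteSpace H] (A : H →L[ℂ] H) : ℝ :=
  ⨆ x : {x : H // ‖x‖ = 1}, ‖(⟪A x.1, x.1⟫_ℂ)‖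

lemma absCLM_one {H : Type*} [NormedAddCommGroup H] [InnerProductSpace ℂ H]
    [CompleteSpace H] : absCLM (1 : H →L[ℂ] H) = 1 := by
  unfold absCLM
  have ha : ContinuousLinearMap.adjoint (1 : H →L[ℂ] H) = 1 := by
    rw [ContinuousLinearMap.one_def, ContinuousLinearMap.adjoint_id]
  rw [ha, one_mul, cfc_apply_one]
  simp

lemma numRad_one {H : Type*} [NormedAddCommGroup H] [InnerProductSpace ℂ H]
    [CompleteSpace H] [Nontrivial H] : numRad (1 : H →L[ℂ] H) = 1 := by
  unfold numRad
  obtain ⟨x, hx⟩ := exists_norm_eq H (le_of_lt one_pos)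
  have : ∀ y : {x : H // ‖x‖ = 1}, ‖(⟪(1 : H →L[ℂ] H) y.1, y.1⟫_ℂ)‖ = 1 := by
    intro y
    simp [inner_self_eq_norm_sq_to_K, y.2]
  calc (⨆ y : {x : H // ‖x‖ = 1}, ‖(⟪(1 : H →L[ℂ] H) y.1, y.1⟫_ℂ)‖)
      = ⨆ _ : {x : H // ‖x‖ = 1}, (1:ℝ) := by exact iSup_congr this
    _ = 1 := ciSup_const (ι := {x : H // ‖x‖ = 1}) (hι := ⟨⟨x, hx⟩⟩)

theorem stmt11 {H : Type*} [NormedAddCommGroup H] [InnerProductSpace ℂ H] [CompleteSpace H]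
    [Nontrivial H] (c : ℝ) (hc : 0 < c)
    (h : ∀ A : H →L[ℂ] H, numRad A ^ 2 ≤ c *
      ‖((3:ℝ) • absCLM A + absCLM (ContinuousLinearMap.adjoint A)) ^ 2 +
        (absCLM A + (3:ℝ) • absCLM (ContinuousLinearMap.adjoint A)) ^ 2‖) :
    1 / 32 ≤ c := by
  have h1 := h 1
  have ha : ContinuousLinearMap.adjoint (1 : H →L[ℂ] H) = 1 := by
    rw [ContinuousLinearMap.one_def, ContinuousLinearMap.adjoint_id]
  rw [ha, absCLM_one, numRad_one] at h1
  have hop : ((3:ℝ) • (1 : H →L[ℂ] H) + 1) ^ 2 + ((1 : H →L[ℂ] H) + (3:ℝ) • 1) ^ 2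
      = (32:ℝ) • 1 := by
    have h4 : (3:ℝ) • (1 : H →L[ℂ] H) + 1 = (4:ℝ) • 1 := by module
    have h4' : (1 : H →L[ℂ] H) + (3:ℝ) • 1 = (4:ℝ) • 1 := by module
    rw [h4, h4', smul_pow, one_pow]
    norm_num
    module
  rw [hop] at h1
  have hn : ‖((32:ℝ) • (1 : H →L[ℂ] H))‖ = 32 := by
    rw [norm_smul, norm_one]; simp
  rw [hn, one_pow] at h1
  linarith
end

section
/- Let A ∈ B(H). Then (1/4) ‖A*A + AA*‖ ≤ (1/4) ‖(A*A + AA*)² + |A² + (A*)²|²‖^{1/2} ≤ w(A)². -/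
open scoped InnerProductSpace

section aux

variable {H : Type*} [NormedAddCommGroup H] [InnerProductSpace ℂ H] [CompleteSpace H]

lemma absCLM_sq (A : H →L[ℂ] H) :
    (absCLM A) ^ 2 = ContinuousLinearMap.adjoint A * A := by
  unfold absCLM
  set a := ContinuousLinearMap.adjoint A * A with ha
  have hpos : (0 : H →L[ℂ] H) ≤ a := by
    rw [ha, ← ContinuousLinearMap.star_eq_adjoint]
    exact star_mul_self_nonneg A
  have hsa : IsSelfAdjoint a := IsSelfAdjoint.of_nonneg hpos
  rw [← cfc_pow Real.sqrt 2 a]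
  have h2 : (spectrum ℝ a).EqOn (fun x => Real.sqrt x ^ 2) id := fun x hx => by
    simpa using Real.sq_sqrt (spectrum_nonneg_of_nonneg hpos hx)
  rw [cfc_congr h2, cfc_id ℝ a]

lemma numRad_nonneg (A : H →L[ℂ] H) : 0 ≤ numRad A :=
  Real.iSup_nonneg fun _ => norm_nonneg _

lemma inner_le_numRad (A : H →L[ℂ] H) (x : H) :
    ‖(⟪A x, x⟫_ℂ)‖ ≤ numRad A * ‖x‖ ^ 2 := by
  rcases eq_or_ne x 0 with rfl | hx
  · simp [numRad_nonneg A]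
  · have hnx : ‖x‖ ≠ 0 := norm_ne_zero_iff.mpr hx
    set c : ℂ := ((‖x‖⁻¹ : ℝ) : ℂ) with hc
    have hu : ‖c • x‖ = 1 := by
      rw [norm_smul, hc]
      simp [norm_inv, inv_mul_cancel₀ hnx]
    set u : {y : H // ‖y‖ = 1} := ⟨c • x, hu⟩ with hudef
    have hb : BddAbove (Set.range fun y : {y : H // ‖y‖ = 1} => ‖(⟪A y.1, y.1⟫_ℂ)‖) := by
      refine ⟨‖A‖, ?_⟩
      rintro - ⟨y, rfl⟩
      calc ‖(⟪A y.1, y.1⟫_ℂ)‖ ≤ ‖A y.1‖ * ‖y.1‖ := norm_inner_le_norm _ _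
        _ ≤ (‖A‖ * ‖y.1‖) * ‖y.1‖ := by
            have := A.le_opNorm y.1
            gcongr
        _ = ‖A‖ := by rw [y.2]; ring
    have h1 : ‖(⟪A u.1, u.1⟫_ℂ)‖ ≤ numRad A := le_ciSup hb u
    have h2 : ‖(⟪A u.1, u.1⟫_ℂ)‖ = (‖x‖⁻¹) ^ 2 * ‖(⟪A x, x⟫_ℂ)‖ := by
      simp only [hudef, map_smul, inner_smul_left, inner_smul_right, norm_mul, norm_smul]
      rw [hc]
      simp [RCLike.norm_conj, sq]
      ring
    rw [h2] at h1
    have hx2 : (0:ℝ) < ‖x‖ ^ 2 := by positivity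
    calc ‖(⟪A x, x⟫_ℂ)‖ = ((‖x‖⁻¹) ^ 2 * ‖(⟪A x, x⟫_ℂ)‖) * ‖x‖ ^ 2 := by
          field_simp
      _ ≤ numRad A * ‖x‖ ^ 2 := by gcongr

lemma norm_le_of_inner_le {T : H →L[ℂ] H} (hT : IsSelfAdjoint T) {M : ℝ} (hM : 0 ≤ M)
    (h : ∀ x : H, ‖(⟪T x, x⟫_ℂ)‖ ≤ M * ‖x‖ ^ 2) : ‖T‖ ≤ M := by
  have hadj : ContinuousLinearMap.adjoint T = T := by
    rw [← ContinuousLinearMap.star_eq_adjoint]; exact hT.star_eq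
  have key : ∀ v w : H, 4 * Complex.re (⟪T v, w⟫_ℂ) ≤ 2 * M * (‖v‖ ^ 2 + ‖w‖ ^ 2) := by
    intro v w
    have hsym : (⟪T w, v⟫_ℂ) = starRingEnd ℂ (⟪T v, w⟫_ℂ) := by
      conv_lhs => rw [← hadj]
      rw [ContinuousLinearMap.adjoint_inner_left, ← inner_conj_symm]
    have hpol : (⟪T (v + w), v + w⟫_ℂ) - (⟪T (v - w), v - w⟫_ℂ)
        = 2 * ((⟪T v, w⟫_ℂ) + (⟪T w, v⟫_ℂ)) := by
      simp only [map_add, map_sub, inner_add_left, inner_add_right, inner_sub_left,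
        inner_sub_right]
      ring
    have hre : 4 * Complex.re (⟪T v, w⟫_ℂ)
        = Complex.re ((⟪T (v + w), v + w⟫_ℂ) - (⟪T (v - w), v - w⟫_ℂ)) := by
      rw [hpol, hsym, Complex.add_conj]
      simp
      ring
    calc 4 * Complex.re (⟪T v, w⟫_ℂ)
        = Complex.re (⟪T (v + w), v + w⟫_ℂ) - Complex.re (⟪T (v - w), v - w⟫_ℂ) := by
          rw [hre]; simp
      _ ≤ ‖(⟪T (v + w), v + w⟫_ℂ)‖ + ‖(⟪T (v - w), v - w⟫_ℂ)‖ := by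
          have h1 := Complex.abs_re_le_norm (⟪T (v + w), v + w⟫_ℂ)
          have h2 := Complex.abs_re_le_norm (⟪T (v - w), v - w⟫_ℂ)
          obtain ⟨a1, b1⟩ := abs_le.mp h1
          obtain ⟨a2, b2⟩ := abs_le.mp h2
          linarith
      _ ≤ M * ‖v + w‖ ^ 2 + M * ‖v - w‖ ^ 2 := add_le_add (h _) (h _)
      _ = 2 * M * (‖v‖ ^ 2 + ‖w‖ ^ 2) := by
          have := parallelogram_law_with_norm ℂ v w
          nlinarith [this]
  refine T.opNorm_le_bound hM fun x => ?_
  rcases eq_or_ne (T x) 0 with h0 | h0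
  · simp [h0]; positivity
  · have hTx : (0:ℝ) < ‖T x‖ := norm_pos_iff.mpr h0
    set w : H := ((‖x‖ / ‖T x‖ : ℝ) : ℂ) • T x with hw
    have h1 : Complex.re (⟪T x, w⟫_ℂ) = ‖x‖ * ‖T x‖ := by
      rw [hw, inner_smul_right]
      have : (⟪T x, T x⟫_ℂ) = (‖T x‖ ^ 2 : ℝ) := by
        rw [inner_self_eq_norm_sq_to_K]; norm_num
      rw [this, ← Complex.ofReal_mul, Complex.ofReal_re]
      field_simp
    have h2 : ‖w‖ = ‖x‖ := by
      rw [hw, norm_smul]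
      simp [abs_of_nonneg (div_nonneg (norm_nonneg x) (norm_nonneg (T x)))]
      field_simp
    have := key x w
    rw [h1, h2] at this
    have hxne : x ≠ 0 := fun hc => h0 (by simp [hc])
    have hxpos : (0:ℝ) < ‖x‖ := norm_pos_iff.mpr hxne
    nlinarith [this, hxpos]

end aux

set_option maxHeartbeats 2000000 in
theorem stmt12 {H : Type*} [NormedAddCommGroup H] [InnerProductSpace ℂ H] [CompleteSpace H]
    (A : H →L[ℂ] H) :
    (1 / 4) * ‖ContinuousLinearMap.adjoint A * A + A * ContinuousLinearMap.adjoint A‖ ≤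
        (1 / 4) * Real.sqrt
          ‖(ContinuousLinearMap.adjoint A * A + A * ContinuousLinearMap.adjoint A) ^ 2 +
            (absCLM (A ^ 2 + (ContinuousLinearMap.adjoint A) ^ 2)) ^ 2‖ ∧
      (1 / 4) * Real.sqrt
          ‖(ContinuousLinearMap.adjoint A * A + A * ContinuousLinearMap.adjoint A) ^ 2 +
            (absCLM (A ^ 2 + (ContinuousLinearMap.adjoint A) ^ 2)) ^ 2‖ ≤
        numRad A ^ 2 := by
  set B := ContinuousLinearMap.adjoint A with hB
  have hstar : star A = B := ContinuousLinearMap.star_eq_adjoint A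
  set S : H →L[ℂ] H := B * A + A * B with hS
  set T : H →L[ℂ] H := A ^ 2 + B ^ 2 with hT
  have hstarB : star B = A := by rw [← hstar, star_star]
  have hTsa : IsSelfAdjoint T := by
    rw [IsSelfAdjoint, hT, star_add, star_pow, star_pow, hstar, hstarB, add_comm]
  have hSsa : IsSelfAdjoint S := by
    rw [IsSelfAdjoint, hS, star_add, star_mul, star_mul, hstar, hstarB, add_comm]
  have habs : (absCLM T) ^ 2 = T ^ 2 := by
    rw [absCLM_sq, ← ContinuousLinearMap.star_eq_adjoint, hTsa.star_eq, sq]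
  have hR : (0 : H →L[ℂ] H) ≤ (absCLM T) ^ 2 := by
    rw [absCLM_sq, ← ContinuousLinearMap.star_eq_adjoint]
    exact star_mul_self_nonneg T
  have hS2 : (0 : H →L[ℂ] H) ≤ S ^ 2 := by
    rw [sq]
    nth_rewrite 1 [← hSsa.star_eq]
    exact star_mul_self_nonneg S
  have hnormS2 : ‖S ^ 2‖ = ‖S‖ ^ 2 := by
    rw [sq]
    nth_rewrite 1 [← hSsa.star_eq]
    rw [CStarRing.norm_star_mul_self, sq]
  set N : ℝ := ‖S ^ 2 + (absCLM T) ^ 2‖ with hN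
  constructor
  · have h1 : ‖S ^ 2‖ ≤ N := by
      refine CStarAlgebra.norm_le_norm_of_nonneg_of_le hS2 ?_
      exact le_add_of_nonneg_right hR
    rw [hnormS2] at h1
    have h2 : ‖S‖ ≤ Real.sqrt N := by
      rw [show Real.sqrt N = Real.sqrt N from rfl]
      have := Real.sqrt_le_sqrt h1
      rwa [Real.sqrt_sq (norm_nonneg S)] at this
    linarith
  · set w : ℝ := numRad A with hw
    have hw0 : 0 ≤ w := numRad_nonneg A
    -- bounds on ‖A + B‖ and ‖B - A‖
    have hinner : ∀ x : H, (⟪B x, x⟫_ℂ) = starRingEnd ℂ (⟪A x, x⟫_ℂ) := by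
      intro x
      rw [hB, ContinuousLinearMap.adjoint_inner_left, ← inner_conj_symm]
    have hPnorm : ‖A + B‖ ≤ 2 * w := by
      refine norm_le_of_inner_le ?_ (by linarith) ?_
      · rw [IsSelfAdjoint, star_add, hstar, hstarB, add_comm]
      · intro x
        have : (⟪(A + B) x, x⟫_ℂ) = (⟪A x, x⟫_ℂ) + starRingEnd ℂ (⟪A x, x⟫_ℂ) := by
          rw [ContinuousLinearMap.add_apply, inner_add_left, hinner]
        rw [this]
        calc ‖(⟪A x, x⟫_ℂ) + starRingEnd ℂ (⟪A x, x⟫_ℂ)‖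
            ≤ ‖(⟪A x, x⟫_ℂ)‖ + ‖starRingEnd ℂ (⟪A x, x⟫_ℂ)‖ := norm_add_le _ _
          _ = 2 * ‖(⟪A x, x⟫_ℂ)‖ := by rw [RCLike.norm_conj]; ring
          _ ≤ 2 * (w * ‖x‖ ^ 2) := by
              have := inner_le_numRad A x; gcongr
          _ = 2 * w * ‖x‖ ^ 2 := by ring
    have hQnorm : ‖B - A‖ ≤ 2 * w := by
      have hIQ : ‖(Complex.I • (B - A) : H →L[ℂ] H)‖ = ‖B - A‖ := by
        rw [norm_smul, Complex.norm_I, one_mul]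
      rw [← hIQ]
      refine norm_le_of_inner_le ?_ (by linarith) ?_
      · rw [IsSelfAdjoint, star_smul, star_sub, hstar, hstarB]
        simp only [Complex.star_def, Complex.conj_I, neg_smul, smul_sub, neg_sub]
        abel
      · intro x
        have h1 : (⟪(Complex.I • (B - A)) x, x⟫_ℂ)
            = starRingEnd ℂ Complex.I * ((⟪B x, x⟫_ℂ) - (⟪A x, x⟫_ℂ)) := by
          rw [ContinuousLinearMap.smul_apply, inner_smul_left, ContinuousLinearMap.sub_apply,
            inner_sub_left]
        rw [h1, norm_mul, hinner]
        have hI : ‖starRingEnd ℂ Complex.I‖ = 1 := by simp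
        rw [hI, one_mul]
        calc ‖starRingEnd ℂ (⟪A x, x⟫_ℂ) - (⟪A x, x⟫_ℂ)‖
            ≤ ‖starRingEnd ℂ (⟪A x, x⟫_ℂ)‖ + ‖(⟪A x, x⟫_ℂ)‖ := norm_sub_le _ _
          _ = 2 * ‖(⟪A x, x⟫_ℂ)‖ := by rw [RCLike.norm_conj]; ring
          _ ≤ 2 * (w * ‖x‖ ^ 2) := by
              have := inner_le_numRad A x; gcongr
          _ = 2 * w * ‖x‖ ^ 2 := by ring
    -- the algebraic identity
    have hkey : (S ^ 2 + T ^ 2) + (S ^ 2 + T ^ 2) = (A + B) ^ 4 + (B - A) ^ 4 := by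
      rw [hS, hT]
      noncomm_ring
    have hNle : N ≤ 16 * w ^ 4 := by
      have e1 : N = ‖S ^ 2 + T ^ 2‖ := by rw [hN, habs]
      have e2 : (2:ℝ) * ‖S ^ 2 + T ^ 2‖ = ‖(A + B) ^ 4 + (B - A) ^ 4‖ := by
        rw [← hkey]
        rw [show (S ^ 2 + T ^ 2) + (S ^ 2 + T ^ 2) = (2:ℝ) • (S ^ 2 + T ^ 2) by
          rw [two_smul]]
        rw [norm_smul]
        simp
      have e3 : ‖(A + B) ^ 4 + (B - A) ^ 4‖ ≤ ‖A + B‖ ^ 4 + ‖B - A‖ ^ 4 := by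
        calc ‖(A + B) ^ 4 + (B - A) ^ 4‖ ≤ ‖(A + B) ^ 4‖ + ‖(B - A) ^ 4‖ := norm_add_le _ _
          _ ≤ ‖A + B‖ ^ 4 + ‖B - A‖ ^ 4 := by
              gcongr <;> exact norm_pow_le' _ (by norm_num)
      have e4 : ‖A + B‖ ^ 4 + ‖B - A‖ ^ 4 ≤ 32 * w ^ 4 := by
        have p1 : ‖A + B‖ ^ 4 ≤ (2 * w) ^ 4 := by gcongr
        have p2 : ‖B - A‖ ^ 4 ≤ (2 * w) ^ 4 := by gcongr
        nlinarith
      rw [e1]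
      nlinarith [norm_nonneg (S ^ 2 + T ^ 2)]
    have hsq : Real.sqrt N ≤ 4 * w ^ 2 := by
      have : Real.sqrt N ≤ Real.sqrt (16 * w ^ 4) := Real.sqrt_le_sqrt hNle
      have h16 : Real.sqrt (16 * w ^ 4) = 4 * w ^ 2 := by
        rw [show (16:ℝ) * w ^ 4 = (4 * w ^ 2) ^ 2 by ring]
        exact Real.sqrt_sq (by positivity)
      linarith
    linarith
end

section
/- Let A ∈ B(H) and let f : [0,∞) → [0,∞) be an increasing convex function which is continuous. Then for every unit vector x ∈ H, f(|⟨Ax, x⟩|) ≤ f(⟨((|A| + |A*|)/2)x, x⟩). -/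
open scoped InnerProductSpace
set_option maxHeartbeats 1000000

section Intertwine

variable {𝓐 : Type*} [CStarAlgebra 𝓐]

lemma aux_pow_comm (a : 𝓐) (n : ℕ) : a * (star a * a) ^ n = (a * star a) ^ n * a := by
  induction n with
  | zero => simp
  | succ n ih =>
    rw [pow_succ, pow_succ, ← mul_assoc, ih]
    rw [mul_assoc, mul_assoc, mul_assoc, ← mul_assoc a (star a) a]

lemma aux_aeval_comm (a : 𝓐) (p : Polynomial ℝ) :
    a * (Polynomial.aeval (star a * a) p) = (Polynomial.aeval (a * star a) p) * a := by
  induction p using Polynomial.induction_on' with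
  | add p q hp hq => simp [map_add, mul_add, add_mul, hp, hq]
  | monomial n c =>
    simp only [Polynomial.aeval_monomial]
    calc a * (algebraMap ℝ 𝓐 c * (star a * a) ^ n)
        = algebraMap ℝ 𝓐 c * (a * (star a * a) ^ n) := by
          rw [← mul_assoc, ← Algebra.commutes c a, mul_assoc]
      _ = algebraMap ℝ 𝓐 c * ((a * star a) ^ n * a) := by rw [aux_pow_comm]
      _ = algebraMap ℝ 𝓐 c * (a * star a) ^ n * a := by rw [mul_assoc]

lemma mul_cfc_comm (a : 𝓐) (f : ℝ → ℝ) (hf : Continuous f) :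
    a * cfc f (star a * a) = cfc f (a * star a) * a := by
  set X := star a * a with hXdef
  set Y := a * star a with hYdef
  have hXsa : IsSelfAdjoint X := IsSelfAdjoint.star_mul_self a
  have hYsa : IsSelfAdjoint Y := IsSelfAdjoint.mul_star_self a
  set M := max (‖X‖ * ‖(1:𝓐)‖) (‖Y‖ * ‖(1:𝓐)‖) with hMdef
  have hsX : spectrum ℝ X ⊆ Set.Icc (-M) M := fun t ht => by
    have h1 := spectrum.norm_le_norm_mul_of_mem ht
    rw [Real.norm_eq_abs] at h1
    exact Set.mem_Icc.mpr (abs_le.mp (h1.trans (le_max_left _ _)))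
  have hsY : spectrum ℝ Y ⊆ Set.Icc (-M) M := fun t ht => by
    have h1 := spectrum.norm_le_norm_mul_of_mem ht
    rw [Real.norm_eq_abs] at h1
    exact Set.mem_Icc.mpr (abs_le.mp (h1.trans (le_max_right _ _)))
  have key : ∀ ε : ℝ, 0 < ε → ‖a * cfc f X - cfc f Y * a‖ ≤ 0 + ε := by
    intro ε hε
    set δ := ε / (2 * ‖a‖ + 2) with hδdef
    have hδ : 0 < δ := by positivity
    obtain ⟨p, hp⟩ := exists_polynomial_near_of_continuousOn (-M) M f hf.continuousOn δ hδ
    have hfp : ∀ b : 𝓐, IsSelfAdjoint b → spectrum ℝ b ⊆ Set.Icc (-M) M →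
        ‖cfc f b - cfc (fun t => p.eval t) b‖ ≤ δ := by
      intro b hb hsb
      rw [← cfc_sub f (fun t => p.eval t) b hf.continuousOn (p.continuous.continuousOn)]
      refine norm_cfc_le hδ.le fun t ht => ?_
      rw [Real.norm_eq_abs, abs_sub_comm]
      exact (hp t (hsb ht)).le
    have hpoly : a * cfc (fun t => p.eval t) X = cfc (fun t => p.eval t) Y * a := by
      rw [cfc_polynomial p X hXsa, cfc_polynomial p Y hYsa]
      exact aux_aeval_comm a p
    calc ‖a * cfc f X - cfc f Y * a‖
        = ‖a * (cfc f X - cfc (fun t => p.eval t) X)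
            + (cfc (fun t => p.eval t) Y - cfc f Y) * a‖ := by
          rw [mul_sub, sub_mul, hpoly]; abel_nf
      _ ≤ ‖a * (cfc f X - cfc (fun t => p.eval t) X)‖
            + ‖(cfc (fun t => p.eval t) Y - cfc f Y) * a‖ := norm_add_le _ _
      _ ≤ ‖a‖ * δ + δ * ‖a‖ := by
          gcongr ?_ + ?_
          · exact (norm_mul_le _ _).trans (by gcongr; exact hfp X hXsa hsX)
          · refine (norm_mul_le _ _).trans ?_
            gcongr
            rw [norm_sub_rev]
            exact hfp Y hYsa hsY
      _ ≤ 0 + ε := by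
          have h2 : δ * (2 * ‖a‖ + 2) = ε := by
            rw [hδdef, div_mul_cancel₀]; positivity
          nlinarith [norm_nonneg a, hδ.le]
  have h0 : ‖a * cfc f X - cfc f Y * a‖ ≤ 0 := le_of_forall_pos_le_add key
  have := le_antisymm h0 (norm_nonneg _)
  rw [norm_eq_zero, sub_eq_zero] at this
  exact this

end Intertwine

section Hilbert

variable {H : Type*} [NormedAddCommGroup H] [InnerProductSpace ℂ H] [CompleteSpace H]

lemma inner_re_mono {T S : H →L[ℂ] H} (h : T ≤ S) (x : H) :
    (⟪T x, x⟫_ℂ).re ≤ (⟪S x, x⟫_ℂ).re := by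
  have h1 := ((ContinuousLinearMap.le_def T S).mp h).inner_nonneg_left x
  simp only [ContinuousLinearMap.sub_apply, inner_sub_left, RCLike.re_to_complex,
    Complex.sub_re] at h1
  rw [Complex.le_def] at h1
  simp only [Complex.zero_re, Complex.sub_re] at h1
  linarith [h1.1]

lemma inner_re_nonneg {T : H →L[ℂ] H} (h : 0 ≤ T) (x : H) : 0 ≤ (⟪T x, x⟫_ℂ).re := by
  have := inner_re_mono h x
  simpa using this

lemma norm_sq_eq' (B : H →L[ℂ] H) (x : H) :
    ‖B x‖ ^ 2 = (⟪(ContinuousLinearMap.adjoint B * B) x, x⟫_ℂ).re := by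
  have h : (ContinuousLinearMap.adjoint B * B) x = ContinuousLinearMap.adjoint B (B x) := rfl
  rw [h, ContinuousLinearMap.adjoint_inner_left, ← RCLike.re_to_complex,
    inner_self_eq_norm_sq]

lemma inner_algebraMap_re (r : ℝ) (x : H) (hx : ‖x‖ = 1) :
    (⟪(algebraMap ℝ (H →L[ℂ] H) r) x, x⟫_ℂ).re = r := by
  rw [Algebra.algebraMap_eq_smul_one]
  simp only [ContinuousLinearMap.smul_apply, ContinuousLinearMap.one_apply]
  rw [← algebraMap_smul ℂ r x, inner_smul_left]
  simp [inner_self_eq_norm_sq_to_K, hx]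

end Hilbert

theorem stmt17 {H : Type*} [NormedAddCommGroup H] [InnerProductSpace ℂ H] [CompleteSpace H]
    (A : H →L[ℂ] H) (f : ℝ → ℝ)
    (hf_cont : ContinuousOn f (Set.Ici 0))
    (hf_nonneg : ∀ x : ℝ, 0 ≤ x → 0 ≤ f x)
    (hf_mono : MonotoneOn f (Set.Ici 0))
    (hf_conv : ConvexOn ℝ (Set.Ici 0) f)
    (x : H) (hx : ‖x‖ = 1) :
    f ‖(⟪A x, x⟫_ℂ)‖ ≤
      f ((⟪((2:ℝ)⁻¹ • (absCLM A + absCLM (ContinuousLinearMap.adjoint A))) x, x⟫_ℂ).re) := by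
  have hstar : star A = ContinuousLinearMap.adjoint A := ContinuousLinearMap.star_eq_adjoint A
  set X := ContinuousLinearMap.adjoint A * A with hXdef
  set Y := A * ContinuousLinearMap.adjoint A with hYdef
  have hXs : star A * A = X := by rw [hstar]
  have hYs : A * star A = Y := by rw [hstar]
  have habs1 : absCLM A = cfc Real.sqrt X := by unfold absCLM; rw [← hXdef]
  have habs2 : absCLM (ContinuousLinearMap.adjoint A) = cfc Real.sqrt Y := by
    unfold absCLM
    rw [ContinuousLinearMap.adjoint_adjoint]
  set α := (⟪absCLM A x, x⟫_ℂ).re with hα_def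
  set β := (⟪absCLM (ContinuousLinearMap.adjoint A) x, x⟫_ℂ).re with hβ_def
  have hXsa : IsSelfAdjoint X := by rw [← hXs]; exact IsSelfAdjoint.star_mul_self A
  have hYsa : IsSelfAdjoint Y := by rw [← hYs]; exact IsSelfAdjoint.mul_star_self A
  have hYpos : (0 : H →L[ℂ] H) ≤ Y := by rw [← hYs]; exact mul_star_self_nonneg A
  have hsY : ∀ t ∈ spectrum ℝ Y, 0 ≤ t := spectrum_nonneg_of_nonneg hYpos
  have hT1pos : (0 : H →L[ℂ] H) ≤ absCLM A := by
    rw [habs1]; exact cfc_nonneg fun t _ => Real.sqrt_nonneg t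
  have hT2pos : (0 : H →L[ℂ] H) ≤ absCLM (ContinuousLinearMap.adjoint A) := by
    rw [habs2]; exact cfc_nonneg fun t _ => Real.sqrt_nonneg t
  have hα : 0 ≤ α := inner_re_nonneg hT1pos x
  have hβ : 0 ≤ β := inner_re_nonneg hT2pos x
  have key : ‖⟪A x, x⟫_ℂ‖ ≤ (α + β) / 2 := by
    refine le_of_forall_pos_le_add fun ε hε => ?_
    set e := 2 * ε with hedef
    have he : 0 < e := by positivity
    set k : ℝ → ℝ := fun t => Real.sqrt (Real.sqrt t + e) with hkdef
    set g : ℝ → ℝ := fun t => (Real.sqrt (Real.sqrt t + e))⁻¹ with hgdef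
    have hkpos : ∀ t : ℝ, 0 < Real.sqrt t + e :=
      fun t => add_pos_of_nonneg_of_pos (Real.sqrt_nonneg t) he
    have hkc : Continuous k :=
      Real.continuous_sqrt.comp (Real.continuous_sqrt.add continuous_const)
    have hgc : Continuous g := hkc.inv₀ fun t => (Real.sqrt_pos.mpr (hkpos t)).ne'
    set K := cfc k X with hKdef
    set W := A * cfc g X with hWdef
    have hWK : W * K = A := by
      rw [hWdef, hKdef, mul_assoc, ← cfc_mul g k X hgc.continuousOn hkc.continuousOn]
      have h1 : cfc (fun t => g t * k t) X = cfc (fun _ : ℝ => (1 : ℝ)) X :=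
        cfc_congr fun t _ => inv_mul_cancel₀ (Real.sqrt_pos.mpr (hkpos t)).ne'
      rw [h1, cfc_const_one ℝ X, mul_one]
    have hKsa : IsSelfAdjoint K := cfc_predicate k X
    have hKsq : ‖K x‖ ^ 2 = α + e := by
      rw [norm_sq_eq', hKsa.adjoint_eq]
      have hKK : K * K = absCLM A + algebraMap ℝ (H →L[ℂ] H) e := by
        rw [hKdef, ← cfc_mul k k X hkc.continuousOn hkc.continuousOn]
        have h1 : cfc (fun t => k t * k t) X = cfc (fun t => Real.sqrt t + e) X :=
          cfc_congr fun t _ => Real.mul_self_sqrt (hkpos t).le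
        rw [h1, cfc_add X Real.sqrt (fun _ => e) Real.continuous_sqrt.continuousOn
          continuousOn_const, habs1, cfc_const e X hXsa]
      rw [hKK]
      simp only [ContinuousLinearMap.add_apply, inner_add_left, Complex.add_re]
      rw [inner_algebraMap_re e x hx]
    have hWW_eq : W * ContinuousLinearMap.adjoint W = cfc (fun t => g t * g t * t) Y := by
      have hgsa : star (cfc g X) = cfc g X := (cfc_predicate g X : IsSelfAdjoint _).star_eq
      rw [← ContinuousLinearMap.star_eq_adjoint, hWdef, star_mul, hgsa]
      have h2 := mul_cfc_comm A (fun t => g t * g t) (hgc.mul hgc)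
      rw [hXs, hYs] at h2
      calc A * cfc g X * (cfc g X * star A)
          = A * (cfc g X * cfc g X) * star A := by
            rw [← mul_assoc, mul_assoc A (cfc g X) (cfc g X)]
        _ = A * cfc (fun t => g t * g t) X * star A := by
            rw [← cfc_mul g g X hgc.continuousOn hgc.continuousOn]
        _ = cfc (fun t => g t * g t) Y * A * star A := by rw [h2]
        _ = cfc (fun t => g t * g t) Y * Y := by rw [mul_assoc, hYs]
        _ = cfc (fun t => g t * g t) Y * cfc (fun t : ℝ => t) Y := by rw [cfc_id' ℝ Y hYsa]
        _ = cfc (fun t => g t * g t * t) Y := by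
            rw [← cfc_mul (fun t => g t * g t) (fun t : ℝ => t) Y ((hgc.mul hgc).continuousOn)
              (continuous_id.continuousOn)]
    have hWW_le : W * ContinuousLinearMap.adjoint W ≤ cfc Real.sqrt Y := by
      rw [hWW_eq]
      refine cfc_mono (fun t ht => ?_) (((hgc.mul hgc).mul continuous_id).continuousOn)
        Real.continuous_sqrt.continuousOn
      have ht0 := hsY t ht
      have hgg : g t * g t = (Real.sqrt t + e)⁻¹ := by
        rw [hgdef]
        dsimp only
        rw [← mul_inv, Real.mul_self_sqrt (hkpos t).le]
      rw [hgg]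
      have h3 : t ≤ (Real.sqrt t + e) * Real.sqrt t := by
        nlinarith [Real.sq_sqrt ht0, Real.sqrt_nonneg t, he.le]
      calc (Real.sqrt t + e)⁻¹ * t
          ≤ (Real.sqrt t + e)⁻¹ * ((Real.sqrt t + e) * Real.sqrt t) :=
            mul_le_mul_of_nonneg_left h3 (inv_nonneg.mpr (hkpos t).le)
        _ = Real.sqrt t := by
            rw [← mul_assoc, inv_mul_cancel₀ (hkpos t).ne', one_mul]
    have hWx : ‖ContinuousLinearMap.adjoint W x‖ ^ 2 ≤ β := by
      rw [norm_sq_eq', ContinuousLinearMap.adjoint_adjoint]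
      have h4 := inner_re_mono hWW_le x
      rw [hβ_def, habs2]
      exact h4
    have hinner : ⟪A x, x⟫_ℂ = ⟪K x, ContinuousLinearMap.adjoint W x⟫_ℂ := by
      conv_lhs => rw [← hWK]
      rw [ContinuousLinearMap.mul_apply]
      exact (ContinuousLinearMap.adjoint_inner_right W (K x) x).symm
    calc ‖⟪A x, x⟫_ℂ‖ = ‖⟪K x, ContinuousLinearMap.adjoint W x⟫_ℂ‖ := by rw [hinner]
      _ ≤ ‖K x‖ * ‖ContinuousLinearMap.adjoint W x‖ := norm_inner_le_norm _ _
      _ ≤ (α + β) / 2 + ε := by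
          nlinarith [norm_nonneg (K x), norm_nonneg (ContinuousLinearMap.adjoint W x),
            sq_nonneg (‖K x‖ - ‖ContinuousLinearMap.adjoint W x‖), hKsq, hWx, hedef]
  have hrhs : (⟪((2:ℝ)⁻¹ • (absCLM A + absCLM (ContinuousLinearMap.adjoint A))) x, x⟫_ℂ).re
      = (α + β) / 2 := by
    rw [ContinuousLinearMap.smul_apply,
      ← algebraMap_smul ℂ ((2:ℝ)⁻¹)
        ((absCLM A + absCLM (ContinuousLinearMap.adjoint A)) x), inner_smul_left]
    simp only [ContinuousLinearMap.add_apply, inner_add_left, Complex.coe_algebraMap,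
      Complex.conj_ofReal, Complex.re_ofReal_mul, Complex.add_re]
    ring
  rw [hrhs]
  exact hf_mono (Set.mem_Ici.mpr (norm_nonneg _)) (Set.mem_Ici.mpr (by linarith)) key
end
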